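/- arXiv:1003.4793 — 17 statements merged into one kernel-verified Lean document; each statement's English description precedes it below -/
import Mathlib

section
/- Let A₁, A₂ ⊆ H × H be monotone operators with resolvents J₁ = J_{A₁} and J₂ = J_{A₂}. If x, y ∈ H satisfy (x, λ₂ • (y − x)) ∈ A₁ and (y, λ₁ • (x − y)) ∈ A₂ (i.e., x = J_{A₁/λ₂} y and y = J_{A₂/λ₁} x), then the point z := λ₁ • x + λ₂ • y satisfies J₁ z = x, J₂ z = y, and z = λ₁ • J₁ z + λ₂ • J₂ z; in particular z ∈ Fix J_A. -/
open scoped RealInnerProductSpace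

lemma resolvent_eq_of_mem
    {H : Type*} [NormedAddCommGroup H] [InnerProductSpace ℝ H]
    (A : Set (H × H))
    (hA : ∀ x u y v : H, (x, u) ∈ A → (y, v) ∈ A → 0 ≤ ⟪x - y, u - v⟫)
    (J : H → H) (hJ : ∀ z : H, (J z, z - J z) ∈ A)
    (z x : H) (hx : (x, z - x) ∈ A) : J z = x := by
  have h := hA (J z) (z - J z) x (z - x) (hJ z) hx
  have h2 : (z - J z) - (z - x) = -(J z - x) := by abel
  rw [h2, inner_neg_right] at h
  have h3 : ⟪J z - x, J z - x⟫ = 0 :=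
    le_antisymm (by linarith) real_inner_self_nonneg
  exact sub_eq_zero.mp (inner_self_eq_zero.mp h3)

/-- If `x = J_{A₁/l₂} y` and `y = J_{A₂/l₁} x`, then `z := l₁ • x + l₂ • y` satisfies
`J₁ z = x`, `J₂ z = y`, and `z = l₁ • J₁ z + l₂ • J₂ z`. -/
theorem fixed_point_of_alternating_resolvents
    {H : Type*} [NormedAddCommGroup H] [InnerProductSpace ℝ H]
    (l₁ l₂ : ℝ) (hl₁ : 0 < l₁) (hl₂ : 0 < l₂) (hl : l₁ + l₂ = 1)
    (A₁ A₂ : Set (H × H))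
    (hA₁ : ∀ x u y v : H, (x, u) ∈ A₁ → (y, v) ∈ A₁ → 0 ≤ ⟪x - y, u - v⟫)
    (hA₂ : ∀ x u y v : H, (x, u) ∈ A₂ → (y, v) ∈ A₂ → 0 ≤ ⟪x - y, u - v⟫)
    (J₁ J₂ : H → H)
    (hJ₁ : ∀ z : H, (J₁ z, z - J₁ z) ∈ A₁)
    (hJ₂ : ∀ z : H, (J₂ z, z - J₂ z) ∈ A₂)
    (x y : H)
    (hx : (x, l₂ • (y - x)) ∈ A₁)
    (hy : (y, l₁ • (x - y)) ∈ A₂) :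
    J₁ (l₁ • x + l₂ • y) = x ∧ J₂ (l₁ • x + l₂ • y) = y ∧
      l₁ • x + l₂ • y =
        l₁ • J₁ (l₁ • x + l₂ • y) + l₂ • J₂ (l₁ • x + l₂ • y) := by
  have hl₁' : l₁ = 1 - l₂ := by linarith
  have hzx : (l₁ • x + l₂ • y) - x = l₂ • (y - x) := by
    rw [hl₁']; module
  have hzy : (l₁ • x + l₂ • y) - y = l₁ • (x - y) := by
    rw [hl₁']; module
  have e1 : J₁ (l₁ • x + l₂ • y) = x :=
    resolvent_eq_of_mem A₁ hA₁ J₁ hJ₁ _ x (by rw [hzx]; exact hx)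
  have e2 : J₂ (l₁ • x + l₂ • y) = y :=
    resolvent_eq_of_mem A₂ hA₂ J₂ hJ₂ _ y (by rw [hzy]; exact hy)
  exact ⟨e1, e2, by rw [e1, e2]⟩
end

section
/- Let A₁, A₂ ⊆ H × H be monotone operators with resolvents J₁ = J_{A₁}, J₂ = J_{A₂}, K₁ = J_{A₁/λ₂}, K₂ = J_{A₂/λ₁}. If z ∈ H satisfies z = λ₁ • J₁ z + λ₂ • J₂ z, then (J₁ z, λ₂ • (J₂ z − J₁ z)) ∈ A₁ and (J₂ z, λ₁ • (J₁ z − J₂ z)) ∈ A₂; that is, J₁ z = K₁ (J₂ z) and J₂ z = K₂ (J₁ z). Consequently J₁ z ∈ E and J₂ z ∈ F. -/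
open scoped RealInnerProductSpace

/-- If `z` is a fixed point of the resolvent average, then `J₁ z = K₁ (J₂ z)` and
`J₂ z = K₂ (J₁ z)`; consequently `J₁ z ∈ E` and `J₂ z ∈ F`. -/
theorem decomposition_of_fixed_point_of_resolvent_average
    {H : Type*} [NormedAddCommGroup H] [InnerProductSpace ℝ H]
    (l₁ l₂ : ℝ) (hl₁ : 0 < l₁) (hl₂ : 0 < l₂) (hl : l₁ + l₂ = 1)
    (A₁ A₂ : Set (H × H))
    (hA₁ : ∀ x u y v : H, (x, u) ∈ A₁ → (y, v) ∈ A₁ → 0 ≤ ⟪x - y, u - v⟫)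
    (hA₂ : ∀ x u y v : H, (x, u) ∈ A₂ → (y, v) ∈ A₂ → 0 ≤ ⟪x - y, u - v⟫)
    (J₁ J₂ K₁ K₂ : H → H)
    (hJ₁ : ∀ z : H, (J₁ z, z - J₁ z) ∈ A₁)
    (hJ₂ : ∀ z : H, (J₂ z, z - J₂ z) ∈ A₂)
    (hK₁ : ∀ z : H, (K₁ z, l₂ • (z - K₁ z)) ∈ A₁)
    (hK₂ : ∀ z : H, (K₂ z, l₁ • (z - K₂ z)) ∈ A₂)
    (z : H) (hz : z = l₁ • J₁ z + l₂ • J₂ z) :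
    (J₁ z, l₂ • (J₂ z - J₁ z)) ∈ A₁ ∧ (J₂ z, l₁ • (J₁ z - J₂ z)) ∈ A₂ ∧
      K₁ (J₂ z) = J₁ z ∧ K₂ (J₁ z) = J₂ z ∧
      J₁ z ∈ {x : H | K₁ (K₂ x) = x} ∧ J₂ z ∈ {y : H | K₂ (K₁ y) = y} := by
  have hl' : l₁ = 1 - l₂ := by linarith
  have h1 : z - J₁ z = l₂ • (J₂ z - J₁ z) := by
    nth_rewrite 1 [hz]
    rw [hl']; module
  have h2 : z - J₂ z = l₁ • (J₁ z - J₂ z) := by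
    nth_rewrite 1 [hz]
    rw [hl']; module
  have m1 : (J₁ z, l₂ • (J₂ z - J₁ z)) ∈ A₁ := h1 ▸ hJ₁ z
  have m2 : (J₂ z, l₁ • (J₁ z - J₂ z)) ∈ A₂ := h2 ▸ hJ₂ z
  have e1 : K₁ (J₂ z) = J₁ z := by
    have hm := hA₁ _ _ _ _ (hK₁ (J₂ z)) m1
    have : l₂ • (J₂ z - K₁ (J₂ z)) - l₂ • (J₂ z - J₁ z)
        = -(l₂ • (K₁ (J₂ z) - J₁ z)) := by module
    rw [this, inner_neg_right, real_inner_smul_right, real_inner_self_eq_norm_sq] at hm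
    have h0 : l₂ * ‖K₁ (J₂ z) - J₁ z‖ ^ 2 = 0 := le_antisymm (by linarith) (by positivity)
    have hn : K₁ (J₂ z) - J₁ z = 0 := by
      have := (mul_eq_zero.mp h0).resolve_left hl₂.ne'
      simpa using this
    exact sub_eq_zero.mp hn
  have e2 : K₂ (J₁ z) = J₂ z := by
    have hm := hA₂ _ _ _ _ (hK₂ (J₁ z)) m2
    have : l₁ • (J₁ z - K₂ (J₁ z)) - l₁ • (J₁ z - J₂ z)
        = -(l₁ • (K₂ (J₁ z) - J₂ z)) := by module
    rw [this, inner_neg_right, real_inner_smul_right, real_inner_self_eq_norm_sq] at hm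
    have h0 : l₁ * ‖K₂ (J₁ z) - J₂ z‖ ^ 2 = 0 := le_antisymm (by linarith) (by positivity)
    have hn : K₂ (J₁ z) - J₂ z = 0 := by
      have := (mul_eq_zero.mp h0).resolve_left hl₁.ne'
      simpa using this
    exact sub_eq_zero.mp hn
  exact ⟨m1, m2, e1, e2, by simp [e2, e1], by simp [e1, e2]⟩
end

section
/- Let A₁, A₂ ⊆ H × H be monotone operators. If (x₁, y₁) ∈ S and (x₂, y₂) ∈ S, then y₁ − x₁ = y₂ − x₂; that is, the gap vector y − x is the same for every pair (x, y) ∈ S. -/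
open scoped RealInnerProductSpace

/-- The gap vector `y − x` is the same for every pair `(x, y) ∈ S`. -/
theorem gap_vector_unique
    {H : Type*} [NormedAddCommGroup H] [InnerProductSpace ℝ H]
    (l₁ l₂ : ℝ) (hl₁ : 0 < l₁) (hl₂ : 0 < l₂) (hl : l₁ + l₂ = 1)
    (A₁ A₂ : Set (H × H))
    (hA₁ : ∀ x u y v : H, (x, u) ∈ A₁ → (y, v) ∈ A₁ → 0 ≤ ⟪x - y, u - v⟫)
    (hA₂ : ∀ x u y v : H, (x, u) ∈ A₂ → (y, v) ∈ A₂ → 0 ≤ ⟪x - y, u - v⟫)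
    (x₁ y₁ x₂ y₂ : H)
    (h₁ : (x₁, l₂ • (y₁ - x₁)) ∈ A₁ ∧ (y₁, l₁ • (x₁ - y₁)) ∈ A₂)
    (h₂ : (x₂, l₂ • (y₂ - x₂)) ∈ A₁ ∧ (y₂, l₁ • (x₂ - y₂)) ∈ A₂) :
    y₁ - x₁ = y₂ - x₂ := by
  set d := (y₁ - x₁) - (y₂ - x₂) with hd
  have h1 := hA₁ _ _ _ _ h₁.1 h₂.1
  have h2 := hA₂ _ _ _ _ h₁.2 h₂.2
  rw [← smul_sub, real_inner_smul_right] at h1 h2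
  have e1 : (y₁ - x₁) - (y₂ - x₂) = d := rfl
  have e2 : (x₁ - y₁) - (x₂ - y₂) = -d := by rw [hd]; abel
  rw [e1] at h1
  rw [e2, inner_neg_right] at h2
  have ha : 0 ≤ ⟪x₁ - x₂, d⟫ := nonneg_of_mul_nonneg_right h1 hl₂
  have hb : ⟪y₁ - y₂, d⟫ ≤ 0 := by nlinarith
  have hdd : ⟪d, d⟫ ≤ 0 := by
    have : ⟪d, d⟫ = ⟪y₁ - y₂, d⟫ - ⟪x₁ - x₂, d⟫ := by
      rw [← inner_sub_left]; congr 1; rw [hd]; abel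
    linarith
  have : d = 0 := by
    have := real_inner_self_nonneg (x := d)
    have h0 : ⟪d, d⟫ = 0 := le_antisymm hdd this
    exact inner_self_eq_zero.mp h0
  exact sub_eq_zero.mp this
end

section
/- Let A₁, A₂ ⊆ H × H be monotone operators with resolvents J₁ = J_{A₁}, J₂ = J_{A₂}. Then the map T : (x, y) ↦ λ₁ • x + λ₂ • y is a bijection from S onto Fix J_A, and its inverse is the map z ↦ (J₁ z, J₂ z): for every (x, y) ∈ S one has λ₁ • x + λ₂ • y ∈ Fix J_A with J₁(λ₁ • x + λ₂ • y) = x and J₂(λ₁ • x + λ₂ • y) = y, and for every z ∈ Fix J_A one has (J₁ z, J₂ z) ∈ S with λ₁ • J₁ z + λ₂ • J₂ z = z. In particular Fix J_A = {λ₁ • x + λ₂ • y : (x, y) ∈ S}. -/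
open scoped RealInnerProductSpace

private lemma res_uniq {H : Type*} [NormedAddCommGroup H] [InnerProductSpace ℝ H]
    (A : Set (H × H))
    (hA : ∀ x u y v : H, (x, u) ∈ A → (y, v) ∈ A → 0 ≤ ⟪x - y, u - v⟫)
    (J : H → H) (hJ : ∀ z : H, (J z, z - J z) ∈ A)
    (x z : H) (hx : (x, z - x) ∈ A) : J z = x := by
  have h := hA x (z - x) (J z) (z - J z) hx (hJ z)
  have : (z - x) - (z - J z) = -(x - J z) := by abel
  rw [this, inner_neg_right, real_inner_self_eq_norm_sq] at h
  have : ‖x - J z‖ = 0 := by nlinarith [sq_nonneg ‖x - J z‖]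
  have := norm_eq_zero.mp this
  rw [sub_eq_zero] at this
  exact this.symm

/-- The map `T : (x, y) ↦ l₁ • x + l₂ • y` is a bijection from `S` onto `Fix J_A`
with inverse `z ↦ (J₁ z, J₂ z)`. -/
theorem averaging_is_bijection_from_S_onto_Fix
    {H : Type*} [NormedAddCommGroup H] [InnerProductSpace ℝ H]
    (l₁ l₂ : ℝ) (hl₁ : 0 < l₁) (hl₂ : 0 < l₂) (hl : l₁ + l₂ = 1)
    (A₁ A₂ : Set (H × H))
    (hA₁ : ∀ x u y v : H, (x, u) ∈ A₁ → (y, v) ∈ A₁ → 0 ≤ ⟪x - y, u - v⟫)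
    (hA₂ : ∀ x u y v : H, (x, u) ∈ A₂ → (y, v) ∈ A₂ → 0 ≤ ⟪x - y, u - v⟫)
    (J₁ J₂ : H → H)
    (hJ₁ : ∀ z : H, (J₁ z, z - J₁ z) ∈ A₁)
    (hJ₂ : ∀ z : H, (J₂ z, z - J₂ z) ∈ A₂) :
    (∀ x y : H, (x, l₂ • (y - x)) ∈ A₁ → (y, l₁ • (x - y)) ∈ A₂ →
      (l₁ • x + l₂ • y) ∈ {z : H | z = l₁ • J₁ z + l₂ • J₂ z} ∧
      J₁ (l₁ • x + l₂ • y) = x ∧ J₂ (l₁ • x + l₂ • y) = y) ∧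
    (∀ z : H, z = l₁ • J₁ z + l₂ • J₂ z →
      ((J₁ z, l₂ • (J₂ z - J₁ z)) ∈ A₁ ∧ (J₂ z, l₁ • (J₁ z - J₂ z)) ∈ A₂) ∧
      l₁ • J₁ z + l₂ • J₂ z = z) ∧
    {z : H | z = l₁ • J₁ z + l₂ • J₂ z} =
      (fun p : H × H => l₁ • p.1 + l₂ • p.2) ''
        {p : H × H | (p.1, l₂ • (p.2 - p.1)) ∈ A₁ ∧ (p.2, l₁ • (p.1 - p.2)) ∈ A₂} := by
  have key : ∀ x y : H, (x, l₂ • (y - x)) ∈ A₁ → (y, l₁ • (x - y)) ∈ A₂ →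
      J₁ (l₁ • x + l₂ • y) = x ∧ J₂ (l₁ • x + l₂ • y) = y := by
    intro x y hx hy
    have e1 : (l₁ • x + l₂ • y) - x = l₂ • (y - x) := by
      have : l₁ = 1 - l₂ := by linarith
      rw [this]; module
    have e2 : (l₁ • x + l₂ • y) - y = l₁ • (x - y) := by
      have : l₂ = 1 - l₁ := by linarith
      rw [this]; module
    constructor
    · exact res_uniq A₁ hA₁ J₁ hJ₁ x _ (by rw [e1]; exact hx)
    · exact res_uniq A₂ hA₂ J₂ hJ₂ y _ (by rw [e2]; exact hy)
  have fwd : ∀ x y : H, (x, l₂ • (y - x)) ∈ A₁ → (y, l₁ • (x - y)) ∈ A₂ →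
      (l₁ • x + l₂ • y) ∈ {z : H | z = l₁ • J₁ z + l₂ • J₂ z} ∧
      J₁ (l₁ • x + l₂ • y) = x ∧ J₂ (l₁ • x + l₂ • y) = y := by
    intro x y hx hy
    obtain ⟨h1, h2⟩ := key x y hx hy
    exact ⟨by simp [Set.mem_setOf_eq, h1, h2], h1, h2⟩
  have bwd : ∀ z : H, z = l₁ • J₁ z + l₂ • J₂ z →
      ((J₁ z, l₂ • (J₂ z - J₁ z)) ∈ A₁ ∧ (J₂ z, l₁ • (J₁ z - J₂ z)) ∈ A₂) ∧
      l₁ • J₁ z + l₂ • J₂ z = z := by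
    intro z hz
    have e1 : l₂ • (J₂ z - J₁ z) = z - J₁ z := by
      nth_rewrite 3 [hz]
      have : l₂ = 1 - l₁ := by linarith
      rw [this]; module
    have e2 : l₁ • (J₁ z - J₂ z) = z - J₂ z := by
      nth_rewrite 3 [hz]
      have : l₁ = 1 - l₂ := by linarith
      rw [this]; module
    exact ⟨⟨by rw [e1]; exact hJ₁ z, by rw [e2]; exact hJ₂ z⟩, hz.symm⟩
  refine ⟨fwd, bwd, ?_⟩
  ext z
  constructor
  · intro hz
    exact ⟨(J₁ z, J₂ z), (bwd z hz).1, (bwd z hz).2⟩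
  · rintro ⟨⟨x, y⟩, ⟨hx, hy⟩, rfl⟩
    exact (fwd x y hx hy).1
end

section
/- Let A₁, A₂ ⊆ H × H be monotone operators with resolvents K₁ = J_{A₁/λ₂}, K₂ = J_{A₂/λ₁}. Then K₂ restricted to E is a bijection from E onto F whose inverse is K₁ restricted to F: for every x ∈ E, K₂ x ∈ F and K₁ (K₂ x) = x, and for every y ∈ F, K₁ y ∈ E and K₂ (K₁ y) = y. Moreover the displacement of K₂ on E is constant: for all x, x′ ∈ E, K₂ x − x = K₂ x′ − x′ (this common value is the gap vector u*), so K₂ acts on E as the translation x ↦ x + u*. -/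
open scoped RealInnerProductSpace

/-- `K₂` restricted to `E` is a bijection from `E` onto `F` with inverse `K₁`
restricted to `F`, and its displacement on `E` is constant. -/
theorem E_to_F_translation
    {H : Type*} [NormedAddCommGroup H] [InnerProductSpace ℝ H]
    (l₁ l₂ : ℝ) (hl₁ : 0 < l₁) (hl₂ : 0 < l₂) (hl : l₁ + l₂ = 1)
    (A₁ A₂ : Set (H × H))
    (hA₁ : ∀ x u y v : H, (x, u) ∈ A₁ → (y, v) ∈ A₁ → 0 ≤ ⟪x - y, u - v⟫)
    (hA₂ : ∀ x u y v : H, (x, u) ∈ A₂ → (y, v) ∈ A₂ → 0 ≤ ⟪x - y, u - v⟫)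
    (K₁ K₂ : H → H)
    (hK₁ : ∀ z : H, (K₁ z, l₂ • (z - K₁ z)) ∈ A₁)
    (hK₂ : ∀ z : H, (K₂ z, l₁ • (z - K₂ z)) ∈ A₂) :
    (∀ x ∈ {x : H | K₁ (K₂ x) = x},
      K₂ x ∈ {y : H | K₂ (K₁ y) = y} ∧ K₁ (K₂ x) = x) ∧
    (∀ y ∈ {y : H | K₂ (K₁ y) = y},
      K₁ y ∈ {x : H | K₁ (K₂ x) = x} ∧ K₂ (K₁ y) = y) ∧
    (∀ x ∈ {x : H | K₁ (K₂ x) = x}, ∀ x' ∈ {x : H | K₁ (K₂ x) = x},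
      K₂ x - x = K₂ x' - x') := by

  refine ⟨?_, ?_, ?_⟩
  · intro x hx
    simp only [Set.mem_setOf_eq] at hx ⊢
    exact ⟨by rw [hx], hx⟩
  · intro y hy
    simp only [Set.mem_setOf_eq] at hy ⊢
    exact ⟨by rw [hy], hy⟩
  · intro x hx x' hx'
    simp only [Set.mem_setOf_eq] at hx hx'
    set y := K₂ x with hy
    set y' := K₂ x' with hy'
    have h2 := hA₂ y (l₁ • (x - y)) y' (l₁ • (x' - y')) (hK₂ x) (hK₂ x')
    have h1 := hA₁ (K₁ y) (l₂ • (y - K₁ y)) (K₁ y') (l₂ • (y' - K₁ y')) (hK₁ y) (hK₁ y')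
    rw [hx, hx'] at h1
    rw [← smul_sub, real_inner_smul_right] at h1 h2
    have h1' : 0 ≤ ⟪x - x', (y - x) - (y' - x')⟫ := nonneg_of_mul_nonneg_right h1 hl₂
    have h2' : 0 ≤ ⟪y - y', (x - y) - (x' - y')⟫ := nonneg_of_mul_nonneg_right h2 hl₁
    set d := (y - x) - (y' - x') with hd
    have e1 : (x - y) - (x' - y') = -d := by rw [hd]; abel
    rw [e1, inner_neg_right] at h2'
    have key : ⟪d, d⟫ ≤ 0 := by
      have e2 : d = (y - y') - (x - x') := by rw [hd]; abel
      calc ⟪d, d⟫ = ⟪y - y', d⟫ - ⟪x - x', d⟫ := by rw [e2, inner_sub_left]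
        _ ≤ 0 := by linarith
    have hdz : d = 0 := by
      have := real_inner_self_nonneg (x := d)
      have : ⟪d, d⟫ = 0 := le_antisymm key this
      exact inner_self_eq_zero.mp this
    rw [hd] at hdz
    linear_combination (norm := abel) hdz
end

section
/- Let A₁, A₂ ⊆ H × H be monotone operators with resolvents J₁ = J_{A₁}, J₂ = J_{A₂}, K₁ = J_{A₁/λ₂}, K₂ = J_{A₂/λ₁}. Then the map H₁ : x ↦ λ₁ • x + λ₂ • K₂ x is a bijection from E onto Fix J_A whose inverse is z ↦ J₁ z: for every x ∈ E, λ₁ • x + λ₂ • K₂ x ∈ Fix J_A and J₁(λ₁ • x + λ₂ • K₂ x) = x, and for every z ∈ Fix J_A, J₁ z ∈ E and λ₁ • J₁ z + λ₂ • K₂ (J₁ z) = z. Moreover, for any x₀ ∈ E, setting u* := K₂ x₀ − x₀, one has Fix J_A = {x + λ₂ • u* : x ∈ E}. -/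
open scoped RealInnerProductSpace

/-- The map `H₁ : x ↦ l₁ • x + l₂ • K₂ x` is a bijection from `E` onto `Fix J_A`
with inverse `z ↦ J₁ z`; moreover `Fix J_A = E + l₂ • u*`. -/
theorem E_to_Fix_bijection
    {H : Type*} [NormedAddCommGroup H] [InnerProductSpace ℝ H]
    (l₁ l₂ : ℝ) (hl₁ : 0 < l₁) (hl₂ : 0 < l₂) (hl : l₁ + l₂ = 1)
    (A₁ A₂ : Set (H × H))
    (hA₁ : ∀ x u y v : H, (x, u) ∈ A₁ → (y, v) ∈ A₁ → 0 ≤ ⟪x - y, u - v⟫)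
    (hA₂ : ∀ x u y v : H, (x, u) ∈ A₂ → (y, v) ∈ A₂ → 0 ≤ ⟪x - y, u - v⟫)
    (J₁ J₂ K₁ K₂ : H → H)
    (hJ₁ : ∀ z : H, (J₁ z, z - J₁ z) ∈ A₁)
    (hJ₂ : ∀ z : H, (J₂ z, z - J₂ z) ∈ A₂)
    (hK₁ : ∀ z : H, (K₁ z, l₂ • (z - K₁ z)) ∈ A₁)
    (hK₂ : ∀ z : H, (K₂ z, l₁ • (z - K₂ z)) ∈ A₂) :
    (∀ x ∈ {x : H | K₁ (K₂ x) = x},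
      (l₁ • x + l₂ • K₂ x) ∈ {z : H | z = l₁ • J₁ z + l₂ • J₂ z} ∧
      J₁ (l₁ • x + l₂ • K₂ x) = x) ∧
    (∀ z ∈ {z : H | z = l₁ • J₁ z + l₂ • J₂ z},
      J₁ z ∈ {x : H | K₁ (K₂ x) = x} ∧ l₁ • J₁ z + l₂ • K₂ (J₁ z) = z) ∧
    (∀ x₀ ∈ {x : H | K₁ (K₂ x) = x},
      {z : H | z = l₁ • J₁ z + l₂ • J₂ z} =
        {w : H | ∃ x ∈ {x : H | K₁ (K₂ x) = x}, w = x + l₂ • (K₂ x₀ - x₀)}) := by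
  obtain rfl : l₁ = 1 - l₂ := by linarith
  -- uniqueness of resolvent values
  have uniq : ∀ (A : Set (H × H)),
      (∀ x u y v : H, (x, u) ∈ A → (y, v) ∈ A → 0 ≤ ⟪x - y, u - v⟫) →
      ∀ (μ : ℝ), 0 < μ →
      ∀ {a b y w : H}, (a, b) ∈ A → (y, w) ∈ A → b - w = μ • (y - a) → a = y := by
    intro A hA μ hμ a b y w ha hy hbw
    have h := hA a b y w ha hy
    rw [hbw, real_inner_smul_right, show y - a = -(a - y) by abel, inner_neg_right] at h
    have h2 : ⟪a - y, a - y⟫ ≤ 0 := by nlinarith [h]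
    have := real_inner_self_nonpos.mp h2
    rwa [sub_eq_zero] at this
  -- J₁ applied to l₁ x + l₂ K₂ x, for x ∈ E
  have fwd : ∀ x : H, K₁ (K₂ x) = x →
      J₁ ((1 - l₂) • x + l₂ • K₂ x) = x ∧ J₂ ((1 - l₂) • x + l₂ • K₂ x) = K₂ x := by
    intro x hx
    set z := (1 - l₂) • x + l₂ • K₂ x with hz
    have h1 : (x, l₂ • (K₂ x - x)) ∈ A₁ := by
      have := hK₁ (K₂ x); rwa [hx] at this
    constructor
    · exact uniq A₁ hA₁ 1 one_pos (hJ₁ z) h1 (by rw [hz]; module)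
    · exact uniq A₂ hA₂ 1 one_pos (hJ₂ z) (hK₂ x) (by rw [hz]; module)
  have bwd : ∀ z : H, z = (1 - l₂) • J₁ z + l₂ • J₂ z →
      K₂ (J₁ z) = J₂ z ∧ K₁ (J₂ z) = J₁ z := by
    intro z hz
    constructor
    · exact uniq A₂ hA₂ (1 - l₂) hl₁ (hK₂ (J₁ z)) (hJ₂ z)
        (by nth_rewrite 3 [hz]; module)
    · exact uniq A₁ hA₁ l₂ hl₂ (hK₁ (J₂ z)) (hJ₁ z)
        (by nth_rewrite 3 [hz]; module)
  -- constancy of u on E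
  have uconst : ∀ x x₀ : H, K₁ (K₂ x) = x → K₁ (K₂ x₀) = x₀ →
      K₂ x - x = K₂ x₀ - x₀ := by
    intro x x₀ hx hx₀
    set e := (K₂ x - x) - (K₂ x₀ - x₀) with he
    have h1 : (x, l₂ • (K₂ x - x)) ∈ A₁ := by have := hK₁ (K₂ x); rwa [hx] at this
    have h1' : (x₀, l₂ • (K₂ x₀ - x₀)) ∈ A₁ := by have := hK₁ (K₂ x₀); rwa [hx₀] at this
    have hm1 := hA₁ _ _ _ _ h1 h1'
    have hm2 := hA₂ _ _ _ _ (hK₂ x) (hK₂ x₀)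
    have e1 : l₂ • (K₂ x - x) - l₂ • (K₂ x₀ - x₀) = l₂ • e := by rw [he]; module
    have e2 : K₂ x - K₂ x₀ = (x - x₀) + e := by rw [he]; module
    have e3 : (1 - l₂) • (x - K₂ x) - (1 - l₂) • (x₀ - K₂ x₀) = (1 - l₂) • (-e) := by
      rw [he]; module
    rw [e1, real_inner_smul_right] at hm1
    rw [e2, e3, real_inner_smul_right, inner_add_left, inner_neg_right, inner_neg_right] at hm2
    have hde : (0:ℝ) ≤ ⟪x - x₀, e⟫ := by nlinarith [hm1]
    have hee : ⟪e, e⟫ ≤ 0 := by nlinarith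
    have : e = 0 := real_inner_self_nonpos.mp hee
    rw [he] at this
    exact sub_eq_zero.mp this
  refine ⟨?_, ?_, ?_⟩
  · intro x hx
    obtain ⟨h1, h2⟩ := fwd x hx
    refine ⟨?_, h1⟩
    show _ = _
    rw [h1, h2]
  · intro z hz
    obtain ⟨h1, h2⟩ := bwd z hz
    refine ⟨?_, ?_⟩
    · show K₁ (K₂ (J₁ z)) = J₁ z
      rw [h1, h2]
    · rw [h1]; exact hz.symm
  · intro x₀ hx₀
    ext w
    simp only [Set.mem_setOf_eq]
    constructor
    · intro hw
      obtain ⟨h1, h2⟩ := bwd w hw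
      refine ⟨J₁ w, by rw [h1, h2], ?_⟩
      have hu := uconst (J₁ w) x₀ (by rw [h1, h2]) hx₀
      rw [← hu, h1,
        show J₁ w + l₂ • (J₂ w - J₁ w) = (1 - l₂) • J₁ w + l₂ • J₂ w from by module]
      exact hw
    · rintro ⟨x, hx, rfl⟩
      have hu := uconst x x₀ hx hx₀
      obtain ⟨h1, h2⟩ := fwd x hx
      have hxw : x + l₂ • (K₂ x₀ - x₀) = (1 - l₂) • x + l₂ • K₂ x := by
        rw [← hu]; module
      rw [hxw, h1, h2]
end

section
/- Let A₁, A₂ ⊆ H × H be monotone operators with resolvents J₁ = J_{A₁}, J₂ = J_{A₂}, K₁ = J_{A₁/λ₂}, K₂ = J_{A₂/λ₁}. Then the map H₂ : y ↦ λ₁ • K₁ y + λ₂ • y is a bijection from F onto Fix J_A whose inverse is z ↦ J₂ z: for every y ∈ F, λ₁ • K₁ y + λ₂ • y ∈ Fix J_A and J₂(λ₁ • K₁ y + λ₂ • y) = y, and for every z ∈ Fix J_A, J₂ z ∈ F and λ₁ • K₁ (J₂ z) + λ₂ • J₂ z = z. Moreover, for any y₀ ∈ F, setting u* := y₀ − K₁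 y₀, one has Fix J_A = {y − λ₁ • u* : y ∈ F}. -/
open scoped RealInnerProductSpace

private lemma res_unique' {H : Type*} [NormedAddCommGroup H] [InnerProductSpace ℝ H]
    {A : Set (H × H)}
    (hA : ∀ x u y v : H, (x, u) ∈ A → (y, v) ∈ A → 0 ≤ ⟪x - y, u - v⟫)
    {μ : ℝ} (hμ : 0 < μ) {z x y : H}
    (hx : (x, μ • (z - x)) ∈ A) (hy : (y, μ • (z - y)) ∈ A) : x = y := by
  have h := hA x _ y _ hx hy
  have e : μ • (z - x) - μ • (z - y) = -(μ • (x - y)) := by module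
  rw [e, inner_neg_right, real_inner_smul_right, real_inner_self_eq_norm_sq] at h
  have h0 : ‖x - y‖ ^ 2 ≤ 0 := by nlinarith
  have : x - y = 0 := by
    have := sq_nonneg ‖x - y‖
    have hn : ‖x - y‖ = 0 := by nlinarith
    simpa using hn
  exact sub_eq_zero.mp this

private lemma mem_congr' {H : Type*} {A : Set (H × H)} {x u v : H}
    (h : (x, u) ∈ A) (e : u = v) : (x, v) ∈ A := e ▸ h

/-- The map `H₂ : y ↦ l₁ • K₁ y + l₂ • y` is a bijection from `F` onto `Fix J_A`
with inverse `z ↦ J₂ z`; moreover `Fix J_A = F − l₁ • u*`. -/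
theorem F_to_Fix_bijection
    {H : Type*} [NormedAddCommGroup H] [InnerProductSpace ℝ H]
    (l₁ l₂ : ℝ) (hl₁ : 0 < l₁) (hl₂ : 0 < l₂) (hl : l₁ + l₂ = 1)
    (A₁ A₂ : Set (H × H))
    (hA₁ : ∀ x u y v : H, (x, u) ∈ A₁ → (y, v) ∈ A₁ → 0 ≤ ⟪x - y, u - v⟫)
    (hA₂ : ∀ x u y v : H, (x, u) ∈ A₂ → (y, v) ∈ A₂ → 0 ≤ ⟪x - y, u - v⟫)
    (J₁ J₂ K₁ K₂ : H → H)
    (hJ₁ : ∀ z : H, (J₁ z, z - J₁ z) ∈ A₁)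
    (hJ₂ : ∀ z : H, (J₂ z, z - J₂ z) ∈ A₂)
    (hK₁ : ∀ z : H, (K₁ z, l₂ • (z - K₁ z)) ∈ A₁)
    (hK₂ : ∀ z : H, (K₂ z, l₁ • (z - K₂ z)) ∈ A₂) :
    (∀ y ∈ {y : H | K₂ (K₁ y) = y},
      (l₁ • K₁ y + l₂ • y) ∈ {z : H | z = l₁ • J₁ z + l₂ • J₂ z} ∧
      J₂ (l₁ • K₁ y + l₂ • y) = y) ∧
    (∀ z ∈ {z : H | z = l₁ • J₁ z + l₂ • J₂ z},
      J₂ z ∈ {y : H | K₂ (K₁ y) = y} ∧ l₁ • K₁ (J₂ z) + l₂ • J₂ z = z) ∧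
    (∀ y₀ ∈ {y : H | K₂ (K₁ y) = y},
      {z : H | z = l₁ • J₁ z + l₂ • J₂ z} =
        {w : H | ∃ y ∈ {y : H | K₂ (K₁ y) = y}, w = y - l₁ • (y₀ - K₁ y₀)}) := by
  have hl2 : l₂ = 1 - l₁ := by linarith
  subst hl2
  have hl₂' : (0:ℝ) < 1 - l₁ := hl₂
  -- Part 1
  have P1 : ∀ y ∈ {y : H | K₂ (K₁ y) = y},
      (l₁ • K₁ y + (1 - l₁) • y) ∈ {z : H | z = l₁ • J₁ z + (1 - l₁) • J₂ z} ∧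
      J₂ (l₁ • K₁ y + (1 - l₁) • y) = y := by
    intro y hy
    simp only [Set.mem_setOf_eq] at hy ⊢
    set z := l₁ • K₁ y + (1 - l₁) • y with hzdef
    have hJ1z : (J₁ z, (1:ℝ) • (z - J₁ z)) ∈ A₁ := mem_congr' (hJ₁ z) (one_smul ℝ _).symm
    have hJ2z : (J₂ z, (1:ℝ) • (z - J₂ z)) ∈ A₂ := mem_congr' (hJ₂ z) (one_smul ℝ _).symm
    have hK1y : (K₁ y, (1:ℝ) • (z - K₁ y)) ∈ A₁ :=
      mem_congr' (hK₁ y) (by rw [hzdef]; module)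
    have hyA2 : (y, (1:ℝ) • (z - y)) ∈ A₂ := by
      have h := hK₂ (K₁ y)
      rw [hy] at h
      exact mem_congr' h (by rw [hzdef]; module)
    have e1 : J₁ z = K₁ y := res_unique' hA₁ one_pos hJ1z hK1y
    have e2 : J₂ z = y := res_unique' hA₂ one_pos hJ2z hyA2
    refine ⟨?_, e2⟩
    rw [e1, e2]
  -- Part 2
  have P2 : ∀ z ∈ {z : H | z = l₁ • J₁ z + (1 - l₁) • J₂ z},
      J₂ z ∈ {y : H | K₂ (K₁ y) = y} ∧ l₁ • K₁ (J₂ z) + (1 - l₁) • J₂ z = z := by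
    intro z hz
    simp only [Set.mem_setOf_eq] at hz ⊢
    have e1 : K₁ (J₂ z) = J₁ z := by
      refine res_unique' hA₁ hl₂' (hK₁ (J₂ z)) (mem_congr' (hJ₁ z) ?_)
      linear_combination (norm := module) hz
    have e2 : K₂ (J₁ z) = J₂ z := by
      refine res_unique' hA₂ hl₁ (hK₂ (J₁ z)) (mem_congr' (hJ₂ z) ?_)
      linear_combination (norm := module) hz
    refine ⟨by rw [e1, e2], ?_⟩
    rw [e1]
    linear_combination (norm := module) -hz
  -- the vector y - K₁ y is constant on F
  have hconst : ∀ y ∈ {y : H | K₂ (K₁ y) = y}, ∀ y' ∈ {y : H | K₂ (K₁ y) = y},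
      y - K₁ y = y' - K₁ y' := by
    intro y hy y' hy'
    simp only [Set.mem_setOf_eq] at hy hy'
    have hyA2 : (y, l₁ • (K₁ y - y)) ∈ A₂ := by
      have h := hK₂ (K₁ y); rwa [hy] at h
    have hy'A2 : (y', l₁ • (K₁ y' - y')) ∈ A₂ := by
      have h := hK₂ (K₁ y'); rwa [hy'] at h
    have h1 := hA₁ (K₁ y) _ (K₁ y') _ (hK₁ y) (hK₁ y')
    have h2 := hA₂ y _ y' _ hyA2 hy'A2
    set d := (y - K₁ y) - (y' - K₁ y') with hd
    have e1 : (1 - l₁) • (y - K₁ y) - (1 - l₁) • (y' - K₁ y') = (1 - l₁) • d := by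
      rw [hd]; module
    have e2 : l₁ • (K₁ y - y) - l₁ • (K₁ y' - y') = -(l₁ • d) := by
      rw [hd]; module
    have e3 : K₁ y - K₁ y' = (y - y') - d := by rw [hd]; abel
    rw [e1, e3, real_inner_smul_right, inner_sub_left] at h1
    rw [e2, inner_neg_right, real_inner_smul_right] at h2
    have hdd : ⟪d, d⟫ ≤ 0 := by nlinarith [mul_pos hl₁ hl₂']
    have hdn : ⟪d, d⟫ = 0 := le_antisymm hdd real_inner_self_nonneg
    have : d = 0 := by
      have := real_inner_self_eq_norm_sq d
      rw [hdn] at this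
      have hn : ‖d‖ = 0 := by nlinarith [norm_nonneg d]
      simpa using hn
    exact sub_eq_zero.mp this
  refine ⟨P1, P2, ?_⟩
  intro y₀ hy₀
  ext z
  simp only [Set.mem_setOf_eq]
  constructor
  · intro hz
    obtain ⟨hF, hzy⟩ := P2 z hz
    refine ⟨J₂ z, hF, ?_⟩
    rw [← hconst _ hF _ hy₀]
    linear_combination (norm := module) -hzy
  · rintro ⟨y, hyF, rfl⟩
    have h1 := (P1 y hyF).1
    simp only [Set.mem_setOf_eq] at h1
    have hc := hconst _ hyF _ hy₀
    have : y - l₁ • (y₀ - K₁ y₀) = l₁ • K₁ y + (1 - l₁) • y := by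
      rw [← hc]; module
    rw [this]
    exact h1
end

section
/- Let A₁, A₂ ⊆ H × H be monotone operators with resolvents J₁ = J_{A₁}, J₂ = J_{A₂}, K₁ = J_{A₁/λ₂}, K₂ = J_{A₂/λ₁}. Then Fix J_A = λ₁ • E + λ₂ • F, i.e., Fix J_A = {λ₁ • x + λ₂ • y : x ∈ E, y ∈ F}. -/
open scoped RealInnerProductSpace

lemma inner_self_nonpos_eq_zero' {H : Type*} [NormedAddCommGroup H] [InnerProductSpace ℝ H]
    {x : H} (h : ⟪x, x⟫ ≤ 0) : x = 0 :=
  inner_self_eq_zero.mp (le_antisymm h real_inner_self_nonneg)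

lemma res_uniq' {H : Type*} [NormedAddCommGroup H] [InnerProductSpace ℝ H]
    {c : ℝ} (hc : 0 < c) {w w' : H}
    (h : 0 ≤ ⟪w - w', c • (w' - w)⟫) : w = w' := by
  rw [real_inner_smul_right] at h
  have h2 : ⟪w - w', w' - w⟫ = - ⟪w - w', w - w'⟫ := by
    rw [← inner_neg_right]; congr 1; abel
  rw [h2] at h
  have h3 : ⟪w - w', w - w'⟫ ≤ 0 := by nlinarith [real_inner_self_nonneg (x := w - w')]
  exact sub_eq_zero.mp (inner_self_nonpos_eq_zero' h3)

lemma key_smul' {H : Type*} [NormedAddCommGroup H] [InnerProductSpace ℝ H]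
    {c : ℝ} (hc : 0 < c) (hc1 : c < 1) {s d : H}
    (h1 : 0 ≤ ⟪s, c • d - s⟫) (h2 : 0 ≤ ⟪s - d, c • d - s⟫) : s = c • d := by
  set S := ⟪s, s⟫ with hS
  set D := ⟪d, d⟫ with hD
  set I := ⟪s, d⟫ with hI
  have e1 : ⟪s, c • d - s⟫ = c * I - S := by
    simp [inner_sub_right, real_inner_smul_right, hS, hI]
  have e2 : ⟪s - d, c • d - s⟫ = c * I - S - c * D + I := by
    simp [inner_sub_left, inner_sub_right, real_inner_smul_right, real_inner_comm d s,
      hS, hD, hI]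
    ring
  rw [e1] at h1
  rw [e2] at h2
  have hCS : I * I ≤ S * D := real_inner_mul_inner_self_le s d
  have hSn : 0 ≤ S := real_inner_self_nonneg
  have hDn : 0 ≤ D := real_inner_self_nonneg
  have hIn : 0 ≤ I := by nlinarith
  have goal0 : ⟪s - c • d, s - c • d⟫ ≤ 0 := by
    have e3 : ⟪s - c • d, s - c • d⟫ = S - 2 * c * I + c ^ 2 * D := by
      simp [inner_sub_left, inner_sub_right, real_inner_smul_right, real_inner_smul_left,
        real_inner_comm d s, hS, hD, hI, -inner_self_eq_norm_sq_to_K]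
      ring
    rw [e3]
    nlinarith [mul_nonneg hSn hDn, sq_nonneg (S - c^2 * D), mul_nonneg hSn hIn,
      mul_le_mul h1 h1 (by linarith) (by positivity), sq_nonneg (c*I - S)]
  exact sub_eq_zero.mp (inner_self_nonpos_eq_zero' goal0)

/-- `Fix J_A = l₁ • E + l₂ • F`. -/
theorem Fix_eq_average_of_E_and_F
    {H : Type*} [NormedAddCommGroup H] [InnerProductSpace ℝ H]
    (l₁ l₂ : ℝ) (hl₁ : 0 < l₁) (hl₂ : 0 < l₂) (hl : l₁ + l₂ = 1)
    (A₁ A₂ : Set (H × H))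
    (hA₁ : ∀ x u y v : H, (x, u) ∈ A₁ → (y, v) ∈ A₁ → 0 ≤ ⟪x - y, u - v⟫)
    (hA₂ : ∀ x u y v : H, (x, u) ∈ A₂ → (y, v) ∈ A₂ → 0 ≤ ⟪x - y, u - v⟫)
    (J₁ J₂ K₁ K₂ : H → H)
    (hJ₁ : ∀ z : H, (J₁ z, z - J₁ z) ∈ A₁)
    (hJ₂ : ∀ z : H, (J₂ z, z - J₂ z) ∈ A₂)
    (hK₁ : ∀ z : H, (K₁ z, l₂ • (z - K₁ z)) ∈ A₁)
    (hK₂ : ∀ z : H, (K₂ z, l₁ • (z - K₂ z)) ∈ A₂) :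
    {z : H | z = l₁ • J₁ z + l₂ • J₂ z} =
      {z : H | ∃ x ∈ {x : H | K₁ (K₂ x) = x}, ∃ y ∈ {y : H | K₂ (K₁ y) = y},
        z = l₁ • x + l₂ • y} := by
  have hl₁' : l₁ = 1 - l₂ := by linarith
  have hl₂1 : l₂ < 1 := by linarith
  have hl₁1 : l₁ < 1 := by linarith
  ext z
  simp only [Set.mem_setOf_eq]
  constructor
  · -- forward direction
    intro hz
    set a := J₁ z with ha_def
    set b := J₂ z with hb_def
    have hza : z - a = l₂ • (b - a) := by rw [hz, hl₁']; module
    have hzb : z - b = l₁ • (a - b) := by rw [hz, hl₁']; module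
    have ha1 : (a, l₂ • (b - a)) ∈ A₁ := by rw [← hza]; exact hJ₁ z
    have hb2 : (b, l₁ • (a - b)) ∈ A₂ := by rw [← hzb]; exact hJ₂ z
    have hK1b : K₁ b = a := by
      have m := hA₁ (K₁ b) (l₂ • (b - K₁ b)) a (l₂ • (b - a)) (hK₁ b) ha1
      have e : l₂ • (b - K₁ b) - l₂ • (b - a) = l₂ • (a - K₁ b) := by module
      rw [e] at m
      exact res_uniq' hl₂ m
    have hK2a : K₂ a = b := by
      have m := hA₂ (K₂ a) (l₁ • (a - K₂ a)) b (l₁ • (a - b)) (hK₂ a) hb2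
      have e : l₁ • (a - K₂ a) - l₁ • (a - b) = l₁ • (b - K₂ a) := by module
      rw [e] at m
      exact res_uniq' hl₁ m
    exact ⟨a, by rw [hK2a, hK1b], b, by rw [hK1b, hK2a], hz⟩
  · -- backward direction
    rintro ⟨x, hx, y, hy, hz⟩
    set p := K₂ x with hp_def
    set q := K₁ y with hq_def
    have hp2 : (p, l₁ • (x - p)) ∈ A₂ := hK₂ x
    have hq1 : (q, l₂ • (y - q)) ∈ A₁ := hK₁ y
    have hx1 : (x, l₂ • (p - x)) ∈ A₁ := by
      have := hK₁ p; rwa [show K₁ p = x from hx] at this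
    have hy2 : (y, l₁ • (q - y)) ∈ A₂ := by
      have := hK₂ q; rwa [show K₂ q = y from hy] at this
    -- constancy: x - q = p - y
    have hcon : x - q = p - y := by
      have m1 := hA₁ x (l₂ • (p - x)) q (l₂ • (y - q)) hx1 hq1
      have m2 := hA₂ p (l₁ • (x - p)) y (l₁ • (q - y)) hp2 hy2
      have e1 : l₂ • (p - x) - l₂ • (y - q) = l₂ • ((p - y) - (x - q)) := by module
      have e2 : l₁ • (x - p) - l₁ • (q - y) = l₁ • ((x - q) - (p - y)) := by module
      rw [e1, real_inner_smul_right] at m1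
      rw [e2, real_inner_smul_right] at m2
      have m1' : (0:ℝ) ≤ ⟪x - q, (p - y) - (x - q)⟫ := le_of_mul_le_mul_left (by linarith) hl₂
      have m2' : (0:ℝ) ≤ ⟪p - y, (x - q) - (p - y)⟫ := le_of_mul_le_mul_left (by linarith) hl₁
      set u := x - q
      set w := p - y
      have hsum : ⟪u - w, u - w⟫ ≤ 0 := by
        have ee : ⟪u - w, u - w⟫ = -⟪u, w - u⟫ - ⟪w, u - w⟫ := by
          simp [inner_sub_left, inner_sub_right, real_inner_comm w u, -inner_self_eq_norm_sq_to_K]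
        rw [ee]; linarith
      exact sub_eq_zero.mp (inner_self_nonpos_eq_zero' hsum)
    have hp_eq : p = x - q + y := eq_add_of_sub_eq hcon.symm
    set a := J₁ z with ha_def
    set b := J₂ z with hb_def
    have ha : (a, z - a) ∈ A₁ := hJ₁ z
    have hb : (b, z - b) ∈ A₂ := hJ₂ z
    -- s = a - x, d = q - x, with c = l₂
    have hs : a - x = l₂ • (q - x) := by
      apply key_smul' hl₂ hl₂1
      · have m := hA₁ a (z - a) x (l₂ • (p - x)) ha hx1
        have e : (z - a) - l₂ • (p - x) = l₂ • (q - x) - (a - x) := by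
          rw [hz, hp_eq, hl₁']; module
        rwa [e] at m
      · have m := hA₁ a (z - a) q (l₂ • (y - q)) ha hq1
        have e : (z - a) - l₂ • (y - q) = l₂ • (q - x) - (a - x) := by
          rw [hz, hl₁']; module
        have e' : a - q = (a - x) - (q - x) := by module
        rwa [e, e'] at m
    -- t' = y - b, with c = l₁
    have ht : y - b = l₁ • (q - x) := by
      apply key_smul' hl₁ hl₁1
      · have m := hA₂ y (l₁ • (q - y)) b (z - b) hy2 hb
        have e : l₁ • (q - y) - (z - b) = l₁ • (q - x) - (y - b) := by
          rw [hz, hl₁']; module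
        rwa [e] at m
      · have m := hA₂ p (l₁ • (x - p)) b (z - b) hp2 hb
        have e : l₁ • (x - p) - (z - b) = l₁ • (q - x) - (y - b) := by
          rw [hz, hp_eq, hl₁']; module
        have e' : p - b = (y - b) - (q - x) := by rw [hp_eq]; module
        rwa [e, e'] at m
    have hae : a = x + l₂ • (q - x) := by
      rw [← hs]; module
    have hbe : b = y - l₁ • (q - x) := by
      rw [← ht]; module
    rw [hz, hae, hbe]
    module
end

section
/- Let A₁, A₂ ⊆ H × H be monotone operators with resolvents J₁ = J_{A₁}, J₂ = J_{A₂}, K₁ = J_{A₁/λ₂}, K₂ = J_{A₂/λ₁}, and assume there exists w ∈ H with J₁ w = w and J₂ w = w (i.e., Fix J₁ ∩ Fix J₂ ≠ ∅). Then Fix J_A = {z ∈ H : J₁ z = z} ∩ {z ∈ H : J₂ z = z} = {z ∈ H : K₁ z = z} ∩ {z ∈ H : K₂ z = z} = E = F. -/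
open scoped RealInnerProductSpace

/-- A resolvent-type fixed point characterization: `J z = z ↔ (z, 0) ∈ A`. -/
lemma res_fix_iff {H : Type*} [NormedAddCommGroup H] [InnerProductSpace ℝ H]
    {A : Set (H × H)} (hA : ∀ x u y v : H, (x, u) ∈ A → (y, v) ∈ A → 0 ≤ ⟪x - y, u - v⟫)
    {J : H → H} {c : ℝ} (hc : 0 < c) (hJ : ∀ z : H, (J z, c • (z - J z)) ∈ A)
    (z : H) : J z = z ↔ (z, (0 : H)) ∈ A := by
  constructor
  · intro h
    have := hJ z
    rw [h, sub_self, smul_zero] at this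
    exact this
  · intro h
    have h1 := hA _ _ _ _ (hJ z) h
    rw [sub_zero, inner_smul_right] at h1
    have e : ⟪J z - z, z - J z⟫ = -‖z - J z‖ ^ 2 := by
      rw [← neg_sub z (J z), inner_neg_left, real_inner_self_eq_norm_sq]
    rw [e] at h1
    have hs : (0:ℝ) ≤ -‖z - J z‖ ^ 2 := (mul_nonneg_iff_of_pos_left hc).mp h1
    have hn : ‖z - J z‖ ^ 2 = 0 := le_antisymm (by linarith) (sq_nonneg _)
    have := sub_eq_zero.mp (norm_eq_zero.mp (pow_eq_zero_iff two_ne_zero |>.mp hn))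
    exact this.symm

/-- Cross lemma: if `(x, l₂•(y-x)) ∈ A₁`, `(y, l₁•(x-y)) ∈ A₂`, and `(w,0)` in both,
then `x = y`. -/
lemma cross_eq {H : Type*} [NormedAddCommGroup H] [InnerProductSpace ℝ H]
    {l₁ l₂ : ℝ} (hl₁ : 0 < l₁) (hl₂ : 0 < l₂)
    {A₁ A₂ : Set (H × H)}
    (hA₁ : ∀ x u y v : H, (x, u) ∈ A₁ → (y, v) ∈ A₁ → 0 ≤ ⟪x - y, u - v⟫)
    (hA₂ : ∀ x u y v : H, (x, u) ∈ A₂ → (y, v) ∈ A₂ → 0 ≤ ⟪x - y, u - v⟫)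
    {w x y : H} (hw₁ : (w, (0 : H)) ∈ A₁) (hw₂ : (w, (0 : H)) ∈ A₂)
    (hx : (x, l₂ • (y - x)) ∈ A₁) (hy : (y, l₁ • (x - y)) ∈ A₂) : x = y := by
  have h1 := hA₁ _ _ _ _ hx hw₁
  have h2 := hA₂ _ _ _ _ hy hw₂
  rw [sub_zero, inner_smul_right] at h1 h2
  have hX : 0 ≤ ⟪x - w, y - x⟫ := by nlinarith
  have hY : 0 ≤ ⟪y - w, x - y⟫ := by nlinarith
  have e : ⟪x - w, y - x⟫ + ⟪y - w, x - y⟫ = -‖x - y‖ ^ 2 := by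
    have h3 : ⟪y - w, x - y⟫ = -⟪y - w, y - x⟫ := by
      rw [← inner_neg_right, neg_sub]
    have h4 : ⟪x - w, y - x⟫ - ⟪y - w, y - x⟫ = ⟪x - y, y - x⟫ := by
      rw [← inner_sub_left]; congr 1; abel
    have h5 : ⟪x - y, y - x⟫ = -‖x - y‖ ^ 2 := by
      rw [show y - x = -(x - y) from (neg_sub x y).symm, inner_neg_right,
        real_inner_self_eq_norm_sq]
    linarith [h3, h4, h5]
  have hn : ‖x - y‖ = 0 := by nlinarith [norm_nonneg (x - y), sq_nonneg ‖x - y‖]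
  exact sub_eq_zero.mp (norm_eq_zero.mp hn)

/-- When `Fix J₁ ∩ Fix J₂ ≠ ∅`, all the fixed point sets coincide. -/
theorem fixed_point_sets_coincide_of_common_fixed_point
    {H : Type*} [NormedAddCommGroup H] [InnerProductSpace ℝ H]
    (l₁ l₂ : ℝ) (hl₁ : 0 < l₁) (hl₂ : 0 < l₂) (hl : l₁ + l₂ = 1)
    (A₁ A₂ : Set (H × H))
    (hA₁ : ∀ x u y v : H, (x, u) ∈ A₁ → (y, v) ∈ A₁ → 0 ≤ ⟪x - y, u - v⟫)
    (hA₂ : ∀ x u y v : H, (x, u) ∈ A₂ → (y, v) ∈ A₂ → 0 ≤ ⟪x - y, u - v⟫)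
    (J₁ J₂ K₁ K₂ : H → H)
    (hJ₁ : ∀ z : H, (J₁ z, z - J₁ z) ∈ A₁)
    (hJ₂ : ∀ z : H, (J₂ z, z - J₂ z) ∈ A₂)
    (hK₁ : ∀ z : H, (K₁ z, l₂ • (z - K₁ z)) ∈ A₁)
    (hK₂ : ∀ z : H, (K₂ z, l₁ • (z - K₂ z)) ∈ A₂)
    (w : H) (hw₁ : J₁ w = w) (hw₂ : J₂ w = w) :
    {z : H | z = l₁ • J₁ z + l₂ • J₂ z} =
        {z : H | J₁ z = z} ∩ {z : H | J₂ z = z} ∧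
    {z : H | J₁ z = z} ∩ {z : H | J₂ z = z} =
        {z : H | K₁ z = z} ∩ {z : H | K₂ z = z} ∧
    {z : H | K₁ z = z} ∩ {z : H | K₂ z = z} = {x : H | K₁ (K₂ x) = x} ∧
    {x : H | K₁ (K₂ x) = x} = {y : H | K₂ (K₁ y) = y} := by
  have hJ₁' : ∀ z : H, (J₁ z, (1 : ℝ) • (z - J₁ z)) ∈ A₁ := by
    intro z; simpa using hJ₁ z
  have hJ₂' : ∀ z : H, (J₂ z, (1 : ℝ) • (z - J₂ z)) ∈ A₂ := by
    intro z; simpa using hJ₂ z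
  have hwA₁ : (w, (0 : H)) ∈ A₁ := (res_fix_iff hA₁ one_pos hJ₁' w).mp hw₁
  have hwA₂ : (w, (0 : H)) ∈ A₂ := (res_fix_iff hA₂ one_pos hJ₂' w).mp hw₂
  -- fixed point characterizations
  have fJ₁ := res_fix_iff hA₁ one_pos hJ₁'
  have fJ₂ := res_fix_iff hA₂ one_pos hJ₂'
  have fK₁ := res_fix_iff hA₁ hl₂ hK₁
  have fK₂ := res_fix_iff hA₂ hl₁ hK₂
  -- key common-point lemma for K's
  have keyK : ∀ x : H, K₁ (K₂ x) = x → K₂ x = x ∧ K₁ x = x := by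
    intro x h
    have hx : (x, l₂ • (K₂ x - x)) ∈ A₁ := by
      have := hK₁ (K₂ x); rwa [h] at this
    have hxy : x = K₂ x := cross_eq hl₁ hl₂ hA₁ hA₂ hwA₁ hwA₂ hx (hK₂ x)
    exact ⟨hxy.symm, (congrArg K₁ hxy).trans h⟩
  have keyK' : ∀ y : H, K₂ (K₁ y) = y → K₂ y = y ∧ K₁ y = y := by
    intro y h
    have hy : (y, l₁ • (K₁ y - y)) ∈ A₂ := by
      have := hK₂ (K₁ y); rwa [h] at this
    have hxy : K₁ y = y := cross_eq hl₁ hl₂ hA₁ hA₂ hwA₁ hwA₂ (hK₁ y) hy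
    exact ⟨(congrArg K₂ hxy.symm).trans h, hxy⟩
  refine ⟨?_, ?_, ?_, ?_⟩
  · ext z
    simp only [Set.mem_setOf_eq, Set.mem_inter_iff]
    constructor
    · intro hz
      set a := J₁ z with ha
      set b := J₂ z with hb
      have key1 : z - a = l₂ • (b - a) := by
        rw [hz]
        have h' : l₁ = 1 - l₂ := by linarith
        rw [h']
        module
      have key2 : z - b = l₁ • (a - b) := by
        rw [hz]
        have h' : l₂ = 1 - l₁ := by linarith
        rw [h']
        module
      have h1 := hA₁ _ _ _ _ (hJ₁ z) hwA₁
      have h2 := hA₂ _ _ _ _ (hJ₂ z) hwA₂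
      rw [sub_zero, key1, inner_smul_right] at h1
      rw [sub_zero, key2, inner_smul_right] at h2
      have hX : 0 ≤ ⟪a - w, b - a⟫ := by nlinarith
      have hY : 0 ≤ ⟪b - w, a - b⟫ := by nlinarith
      have e : ⟪a - w, b - a⟫ + ⟪b - w, a - b⟫ = -‖a - b‖ ^ 2 := by
        have h3 : ⟪b - w, a - b⟫ = -⟪b - w, b - a⟫ := by
          rw [← inner_neg_right, neg_sub]
        have h4 : ⟪a - w, b - a⟫ - ⟪b - w, b - a⟫ = ⟪a - b, b - a⟫ := by
          rw [← inner_sub_left]; congr 1; abel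
        have h5 : ⟪a - b, b - a⟫ = -‖a - b‖ ^ 2 := by
          rw [show b - a = -(a - b) from (neg_sub a b).symm, inner_neg_right,
            real_inner_self_eq_norm_sq]
        linarith [h3, h4, h5]
      have hn : ‖a - b‖ = 0 := by nlinarith [norm_nonneg (a - b), sq_nonneg ‖a - b‖]
      have hab : a = b := sub_eq_zero.mp (norm_eq_zero.mp hn)
      have hza : z = a := by
        have : z - a = 0 := by rw [key1, hab, sub_self, smul_zero]
        exact sub_eq_zero.mp this
      exact ⟨hza.symm, by rw [← hab]; exact hza.symm⟩
    · rintro ⟨h1, h2⟩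
      rw [h1, h2, ← add_smul, hl, one_smul]
  · ext z
    simp only [Set.mem_setOf_eq, Set.mem_inter_iff]
    rw [fJ₁ z, fJ₂ z, fK₁ z, fK₂ z]
  · ext x
    simp only [Set.mem_setOf_eq, Set.mem_inter_iff]
    constructor
    · rintro ⟨h1, h2⟩
      rw [h2, h1]
    · intro h
      exact ⟨(keyK x h).2, (keyK x h).1⟩
  · ext y
    simp only [Set.mem_setOf_eq]
    constructor
    · intro h
      obtain ⟨h2, h1⟩ := keyK y h
      rw [h1, h2]
    · intro h
      obtain ⟨h2, h1⟩ := keyK' y h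
      rw [h2, h1]
end

section
/- Define g : H × H → ℝ by g(u, v) := f₁(u)/λ₂ + f₂(v)/λ₁ + ‖u − v‖²/2. Then (x, y) is a global minimizer of g (i.e., g(x, y) ≤ g(u, v) for all u, v ∈ H) if and only if x minimizes u ↦ f₁(u)/λ₂ + ‖y − u‖²/2 over H and y minimizes v ↦ f₂(v)/λ₁ + ‖x − v‖²/2 over H (i.e., x = Prox_{f₁/λ₂} y and y = Prox_{f₂/λ₁} x). Thus the solution set of the joint minimization problem coincides with the set S of fixed points of alternating proximal mappings. -/
/-- First-order optimality condition for the prox minimization. -/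
lemma prox_subgrad {H : Type*} [NormedAddCommGroup H] [InnerProductSpace ℝ H]
    (f : H → ℝ) (hf : ConvexOn ℝ Set.univ f) (c : ℝ) (hc : 0 < c) (y x : H)
    (hmin : ∀ u : H, f x / c + ‖y - x‖ ^ 2 / 2 ≤ f u / c + ‖y - u‖ ^ 2 / 2)
    (u : H) : (inner ℝ (y - x) (u - x) : ℝ) ≤ (f u - f x) / c := by
  have hstep : ∀ t : ℝ, 0 < t → t ≤ 1 →
      (inner ℝ (y - x) (u - x) : ℝ) ≤ (f u - f x) / c + t * ‖u - x‖ ^ 2 / 2 := by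
    intro t ht ht1
    have hw : x + t • (u - x) = (1 - t) • x + t • u := by
      rw [smul_sub, sub_smul, one_smul]; abel
    have hconv := hf.2 (Set.mem_univ x) (Set.mem_univ u)
      (by linarith : (0:ℝ) ≤ 1 - t) ht.le (by ring)
    rw [← hw] at hconv
    have hmw := hmin (x + t • (u - x))
    have hnorm : ‖y - (x + t • (u - x))‖ ^ 2 =
        ‖y - x‖ ^ 2 - 2 * (t * inner ℝ (y - x) (u - x)) + t ^ 2 * ‖u - x‖ ^ 2 := by
      have h1 : y - (x + t • (u - x)) = (y - x) - t • (u - x) := by abel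
      rw [h1, norm_sub_sq_real, real_inner_smul_right, norm_smul,
        Real.norm_eq_abs, abs_of_pos ht]
      ring
    rw [hnorm] at hmw
    have hfx : f (x + t • (u - x)) / c ≤ ((1 - t) * f x + t * f u) / c :=
      div_le_div_of_nonneg_right hconv hc.le |>.trans_eq rfl
    have htI : t * inner ℝ (y - x) (u - x) ≤ t * ((f u - f x) / c) + t ^ 2 * ‖u - x‖ ^ 2 / 2 := by
      have h2 : ((1 - t) * f x + t * f u) / c = f x / c + t * ((f u - f x) / c) := by
        field_simp; ring
      nlinarith [hmw, hfx]
    nlinarith [htI, mul_pos ht ht]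
  refine le_of_forall_pos_le_add fun ε hε => ?_
  obtain ⟨t, ht0, ht1, htN⟩ :
      ∃ t : ℝ, 0 < t ∧ t ≤ 1 ∧ t * ‖u - x‖ ^ 2 / 2 ≤ ε := by
    refine ⟨min 1 (ε / (‖u - x‖ ^ 2 + 1)), lt_min one_pos (by positivity),
      min_le_left _ _, ?_⟩
    have hNpos : (0:ℝ) < ‖u - x‖ ^ 2 + 1 := by positivity
    have h3 : min 1 (ε / (‖u - x‖ ^ 2 + 1)) ≤ ε / (‖u - x‖ ^ 2 + 1) :=
      min_le_right _ _
    have h0 : (0:ℝ) < min 1 (ε / (‖u - x‖ ^ 2 + 1)) :=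
      lt_min one_pos (by positivity)
    have h5 : min 1 (ε / (‖u - x‖ ^ 2 + 1)) * (‖u - x‖ ^ 2 + 1) ≤ ε := by
      calc min 1 (ε / (‖u - x‖ ^ 2 + 1)) * (‖u - x‖ ^ 2 + 1)
          ≤ (ε / (‖u - x‖ ^ 2 + 1)) * (‖u - x‖ ^ 2 + 1) :=
            mul_le_mul_of_nonneg_right h3 hNpos.le
        _ = ε := by field_simp
    nlinarith
  have := hstep t ht0 ht1
  linarith

/-- `(x, y)` minimizes `g(u, v) = f₁(u)/l₂ + f₂(v)/l₁ + ‖u − v‖²/2` if and only if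
`x = Prox_{f₁/l₂} y` and `y = Prox_{f₂/l₁} x`. -/
theorem argmin_g_eq_alternating_prox_fixed_points
    {H : Type*} [NormedAddCommGroup H] [InnerProductSpace ℝ H]
    (l₁ l₂ : ℝ) (hl₁ : 0 < l₁) (hl₂ : 0 < l₂) (hl : l₁ + l₂ = 1)
    (f₁ f₂ : H → ℝ)
    (hf₁ : ConvexOn ℝ Set.univ f₁) (hf₂ : ConvexOn ℝ Set.univ f₂)
    (hf₁c : LowerSemicontinuous f₁) (hf₂c : LowerSemicontinuous f₂)
    (x y : H) :
    (∀ u v : H,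
        f₁ x / l₂ + f₂ y / l₁ + ‖x - y‖ ^ 2 / 2 ≤
          f₁ u / l₂ + f₂ v / l₁ + ‖u - v‖ ^ 2 / 2) ↔
      ((∀ u : H, f₁ x / l₂ + ‖y - x‖ ^ 2 / 2 ≤ f₁ u / l₂ + ‖y - u‖ ^ 2 / 2) ∧
       (∀ v : H, f₂ y / l₁ + ‖x - y‖ ^ 2 / 2 ≤ f₂ v / l₁ + ‖x - v‖ ^ 2 / 2)) := by
  constructor
  · intro h
    constructor
    · intro u
      have := h u y
      rw [norm_sub_rev y x, norm_sub_rev y u]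
      linarith
    · intro v
      have := h x v
      linarith
  · rintro ⟨h1, h2⟩ u v
    have hx := prox_subgrad f₁ hf₁ l₂ hl₂ y x h1 u
    have hy := prox_subgrad f₂ hf₂ l₁ hl₁ x y h2 v
    rw [sub_div] at hx hy
    have h0 : (0:ℝ) ≤ ‖(x - y) - (u - v)‖ ^ 2 := sq_nonneg _
    have hexp : ‖(x - y) - (u - v)‖ ^ 2 =
        ‖x - y‖ ^ 2 - 2 * inner ℝ (x - y) (u - v) + ‖u - v‖ ^ 2 := norm_sub_sq_real _ _
    have hsum : (inner ℝ (y - x) (u - x) : ℝ) + inner ℝ (x - y) (v - y) =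
        ‖x - y‖ ^ 2 - inner ℝ (x - y) (u - v) := by
      have hne : y - x = -(x - y) := by abel
      rw [hne, inner_neg_left]
      have h4 : ((‖x - y‖ : ℝ) ^ 2) = inner ℝ (x - y) (x - y) :=
        (real_inner_self_eq_norm_sq _).symm
      rw [h4]
      simp only [inner_sub_left, inner_sub_right]
      ring_nf
    linarith
end

section
/- Let Q = Prox_{f₂/λ₁} and P = Prox_{f₁/λ₂} be proximal mappings (total functions H → H satisfying the proximal law). Define g₁ : H → ℝ by g₁(u) := f₁(u)/λ₂ + f₂(Q u)/λ₁ + ‖u − Q u‖²/2 (so that the last two terms equal the Moreau envelope e₁(f₂/λ₁)(u)). Then x is a global minimizer of g₁ (i.e., g₁(x) ≤ g₁(u) for all u ∈ H) if and only if P (Q x) = x; that is, the minimizers of g₁ are exactly the fixed points of the composition Prox_{f₁/λ₂} ∘ Prox_{f₂/λ₁}. -/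
open RealInnerProductSpace

/-- A norm inequality equivalent to `0 ≤ ‖a - b‖ ^ 2` after expansion. -/
lemma norm_ineq_aux {H : Type*} [NormedAddCommGroup H] [InnerProductSpace ℝ H]
    (a b c : H) :
    ‖a + c‖ ^ 2 + ‖b - c‖ ^ 2 ≤ ‖a‖ ^ 2 + ‖b‖ ^ 2 + ‖c‖ ^ 2 + ‖a + c - b‖ ^ 2 := by
  have h1 := norm_add_sq_real a c
  have h2 := norm_sub_sq_real b c
  have h3 := norm_sub_sq_real (a + c) b
  have h4 := norm_sub_sq_real a b
  have h5 : ⟪a + c, b⟫ = ⟪a, b⟫ + ⟪c, b⟫ := inner_add_left a c b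
  have h6 : ⟪b, c⟫ = ⟪c, b⟫ := real_inner_comm c b
  nlinarith [sq_nonneg ‖a - b‖]

/-- Strong (1-strongly-convex) form of the proximal inequality for a convex `f`. -/
lemma strong_prox_ineq {H : Type*} [NormedAddCommGroup H] [InnerProductSpace ℝ H]
    (μ : ℝ) (hμ : 0 < μ) (f : H → ℝ) (hf : ConvexOn ℝ Set.univ f) (z y : H)
    (h : ∀ u : H, f y / μ + ‖z - y‖ ^ 2 / 2 ≤ f u / μ + ‖z - u‖ ^ 2 / 2) (u : H) :
    f y / μ + ‖z - y‖ ^ 2 / 2 + ‖u - y‖ ^ 2 / 2 ≤ f u / μ + ‖z - u‖ ^ 2 / 2 := by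
  have hzu : ‖z - u‖ ^ 2 = ‖z - y‖ ^ 2 - 2 * ⟪z - y, u - y⟫ + ‖u - y‖ ^ 2 := by
    have : z - u = (z - y) - (u - y) := by abel
    rw [this, norm_sub_sq_real]
  set q : ℝ := ‖u - y‖ ^ 2 with hqdef
  have hq : 0 ≤ q := by positivity
  rw [hzu]
  refine le_of_forall_pos_le_add fun ε hε => ?_
  set t : ℝ := min (1/2) (ε / (q + 1)) with htdef
  have ht0 : 0 < t := lt_min (by norm_num) (by positivity)
  have ht1 : t ≤ 1/2 := min_le_left _ _
  have htq : t * q / 2 ≤ ε := by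
    have h1 : t ≤ ε / (q + 1) := min_le_right _ _
    have h2 : t * q ≤ (ε / (q + 1)) * q := by nlinarith
    have h3 : (ε / (q + 1)) * q ≤ ε := by
      rw [div_mul_eq_mul_div, div_le_iff₀ (by linarith)]
      nlinarith
    nlinarith
  have hconv := hf.2 (Set.mem_univ y) (Set.mem_univ u) (by linarith : (0:ℝ) ≤ 1 - t)
      ht0.le (by ring)
  set w : H := (1 - t) • y + t • u with hwdef
  have hzw : ‖z - w‖ ^ 2 = ‖z - y‖ ^ 2 - 2 * t * ⟪z - y, u - y⟫ + t ^ 2 * q := by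
    have hw : z - w = (z - y) - t • (u - y) := by
      rw [hwdef]; module
    rw [hw, norm_sub_sq_real, real_inner_smul_right, norm_smul]
    simp [hqdef, mul_pow, abs_of_nonneg ht0.le]
    ring
  have hw := h w
  rw [hzw] at hw
  have hfw : f w / μ ≤ ((1 - t) * f y + t * f u) / μ :=
    (div_le_div_iff_of_pos_right hμ).mpr hconv
  have hsplit : ((1 - t) * f y + t * f u) / μ = (1 - t) * (f y / μ) + t * (f u / μ) := by
    ring
  rw [hsplit] at hfw
  have key : f y / μ ≤ f u / μ - ⟪z - y, u - y⟫ + t * q / 2 := by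
    have h1 : t * (f y / μ) ≤ t * (f u / μ) - t * ⟪z - y, u - y⟫ + t ^ 2 * q / 2 := by
      nlinarith [hw.trans (by linarith : f w / μ + (‖z - y‖ ^ 2 - 2 * t * ⟪z - y, u - y⟫ + t ^ 2 * q) / 2 ≤ (1 - t) * (f y / μ) + t * (f u / μ) + (‖z - y‖ ^ 2 - 2 * t * ⟪z - y, u - y⟫ + t ^ 2 * q) / 2)]
    have := (mul_le_mul_iff_right₀ ht0).mp (by nlinarith : t * (f y / μ) ≤ t * (f u / μ - ⟪z - y, u - y⟫ + t * q / 2))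
    linarith
  linarith

/-- The minimizers of `g₁(u) = f₁(u)/l₂ + e₁(f₂/l₁)(u)` are exactly the fixed points
of `Prox_{f₁/l₂} ∘ Prox_{f₂/l₁}`. -/
theorem argmin_g1_eq_fixed_points_of_prox_composition
    {H : Type*} [NormedAddCommGroup H] [InnerProductSpace ℝ H]
    (l₁ l₂ : ℝ) (hl₁ : 0 < l₁) (hl₂ : 0 < l₂) (hl : l₁ + l₂ = 1)
    (f₁ f₂ : H → ℝ)
    (hf₁ : ConvexOn ℝ Set.univ f₁) (hf₂ : ConvexOn ℝ Set.univ f₂)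
    (hf₁c : LowerSemicontinuous f₁) (hf₂c : LowerSemicontinuous f₂)
    (P Q : H → H)
    (hP : ∀ z u : H, f₁ (P z) / l₂ + ‖z - P z‖ ^ 2 / 2 ≤ f₁ u / l₂ + ‖z - u‖ ^ 2 / 2)
    (hQ : ∀ z u : H, f₂ (Q z) / l₁ + ‖z - Q z‖ ^ 2 / 2 ≤ f₂ u / l₁ + ‖z - u‖ ^ 2 / 2)
    (x : H) :
    (∀ u : H,
        f₁ x / l₂ + f₂ (Q x) / l₁ + ‖x - Q x‖ ^ 2 / 2 ≤
          f₁ u / l₂ + f₂ (Q u) / l₁ + ‖u - Q u‖ ^ 2 / 2) ↔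
      P (Q x) = x := by
  constructor
  · intro hmin
    set y : H := P (Q x) with hy
    have s1 := strong_prox_ineq l₂ hl₂ f₁ hf₁ (Q x) (P (Q x)) (fun v => hP (Q x) v) x
    rw [← hy] at s1
    have s2 := hQ y (Q x)
    have s3 := hmin y
    have e1 : ‖y - Q x‖ = ‖Q x - y‖ := norm_sub_rev _ _
    have e2 : ‖Q x - x‖ = ‖x - Q x‖ := norm_sub_rev _ _
    rw [e1] at s2
    rw [e2] at s1
    have hxy : ‖x - y‖ ^ 2 ≤ 0 := by linarith
    have : x - y = 0 := by
      have h0 : ‖x - y‖ ^ 2 = 0 := le_antisymm hxy (by positivity)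
      have := pow_eq_zero_iff (n := 2) (by norm_num) |>.mp h0
      exact norm_eq_zero.mp this
    have : x = y := by rwa [sub_eq_zero] at this
    exact this.symm
  · intro hfix u
    have SP := strong_prox_ineq l₂ hl₂ f₁ hf₁ (Q x) (P (Q x)) (fun v => hP (Q x) v) u
    rw [hfix] at SP
    have SQ := strong_prox_ineq l₁ hl₁ f₂ hf₂ x (Q x) (fun v => hQ x v) (Q u)
    have NI := norm_ineq_aux (u - x) (Q u - Q x) (x - Q x)
    have v1 : (u - x) + (x - Q x) = u - Q x := by abel
    have v2 : (Q u - Q x) - (x - Q x) = Q u - x := by abel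
    have v3 : u - Q x - (Q u - Q x) = u - Q u := by abel
    rw [v1, v2] at NI
    rw [v3] at NI
    have e1 : ‖Q x - u‖ = ‖u - Q x‖ := norm_sub_rev _ _
    have e2 : ‖x - Q u‖ = ‖Q u - x‖ := norm_sub_rev _ _
    have e3 : ‖Q x - x‖ = ‖x - Q x‖ := norm_sub_rev _ _
    rw [e1, e3] at SP
    rw [e2] at SQ
    linarith [SP, SQ, NI]
end

section
/- Let P = Prox_{f₁/λ₂}, Q = Prox_{f₂/λ₁}, P₁ = Prox_{f₁}, P₂ = Prox_{f₂} be proximal mappings (total functions H → H satisfying the proximal law). Define g(u, v) := f₁(u)/λ₂ + f₂(v)/λ₁ + ‖u − v‖²/2, g₁(u) := f₁(u)/λ₂ + f₂(Q u)/λ₁ + ‖u − Q u‖²/2, g₂(v) := f₁(P v)/λ₂ + ‖v − P v‖²/2 + f₂(v)/λ₁, and g₃(z) := λ₁·(f₁(P₁ z) + ‖z − P₁ z‖²/2) + λ₂·(f₂(P₂ z) + ‖z − P₂ z‖²/2). Then these four minimization problems have the same infimum: for every c ∈ ℝ, the following are equivalent: (a) c ≤ g(u, v) for all u, v ∈ H;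 (b) c ≤ g₁(u) for all u ∈ H; (c) c ≤ g₂(v) for all v ∈ H; (d) λ₁·λ₂·c ≤ g₃(z) for all z ∈ H. -/
local notation "⟪" x ", " y "⟫ℝ" => @inner ℝ _ _ x y

private lemma key_ineq {H : Type*} [NormedAddCommGroup H] [InnerProductSpace ℝ H]
    (l₁ l₂ : ℝ) (hl₁ : 0 < l₁) (hl₂ : 0 < l₂) (hl : l₁ + l₂ = 1) (a b : H) :
    l₁ * l₂ * ‖b - a‖ ^ 2 ≤ l₁ * ‖a‖ ^ 2 + l₂ * ‖b‖ ^ 2 := by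
  have h0 : (0:ℝ) ≤ ⟪l₁ • a + l₂ • b, l₁ • a + l₂ • b⟫ℝ := real_inner_self_nonneg
  have hexp : ⟪l₁ • a + l₂ • b, l₁ • a + l₂ • b⟫ℝ
      = l₁^2 * ‖a‖^2 + 2 * (l₁ * l₂) * ⟪a, b⟫ℝ + l₂^2 * ‖b‖^2 := by
    rw [inner_add_add_self]
    simp [inner_add_add_self, real_inner_smul_left, real_inner_smul_right,
      real_inner_self_eq_norm_sq, real_inner_comm b a, norm_smul,
      Real.norm_eq_abs, mul_pow, sq_abs]
    ring
  have hsub : ‖b - a‖^2 = ‖b‖^2 - 2 * ⟪a, b⟫ℝ + ‖a‖^2 := by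
    rw [@norm_sub_sq_real, real_inner_comm b a]; try ring
  rw [hexp] at h0
  rw [hsub]
  have e3 : l₁ * ‖a‖ ^ 2 * (l₁ + l₂) = l₁ * ‖a‖ ^ 2 := by rw [hl]; ring
  have e4 : l₂ * ‖b‖ ^ 2 * (l₁ + l₂) = l₂ * ‖b‖ ^ 2 := by rw [hl]; ring
  linarith [h0, e3, e4]

private lemma key_eq {H : Type*} [NormedAddCommGroup H] [InnerProductSpace ℝ H]
    (l₁ l₂ : ℝ) (hl₁ : 0 < l₁) (hl₂ : 0 < l₂) (hl : l₁ + l₂ = 1) (u v : H) :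
    l₁ * ‖(l₁ • u + l₂ • v) - u‖ ^ 2 + l₂ * ‖(l₁ • u + l₂ • v) - v‖ ^ 2
      = l₁ * l₂ * ‖u - v‖ ^ 2 := by
  have h1 : (l₁ • u + l₂ • v) - u = l₂ • (v - u) := by
    have h : l₁ = 1 - l₂ := by linarith
    rw [h]; module
  have h2 : (l₁ • u + l₂ • v) - v = l₁ • (u - v) := by
    have h : l₂ = 1 - l₁ := by linarith
    rw [h]; module
  rw [h1, h2, norm_smul, norm_smul, Real.norm_eq_abs, Real.norm_eq_abs,
    abs_of_pos hl₁, abs_of_pos hl₂, norm_sub_rev v u]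
  have h : l₂ = 1 - l₁ := by linarith
  rw [h]; ring

/-- The four minimization problems `g`, `g₁`, `g₂`, `g₃/(l₁l₂)` have the same
infimum. -/
theorem four_problems_same_infimum
    {H : Type*} [NormedAddCommGroup H] [InnerProductSpace ℝ H]
    (l₁ l₂ : ℝ) (hl₁ : 0 < l₁) (hl₂ : 0 < l₂) (hl : l₁ + l₂ = 1)
    (f₁ f₂ : H → ℝ)
    (hf₁ : ConvexOn ℝ Set.univ f₁) (hf₂ : ConvexOn ℝ Set.univ f₂)
    (hf₁c : LowerSemicontinuous f₁) (hf₂c : LowerSemicontinuous f₂)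
    (P Q P₁ P₂ : H → H)
    (hP : ∀ z u : H, f₁ (P z) / l₂ + ‖z - P z‖ ^ 2 / 2 ≤ f₁ u / l₂ + ‖z - u‖ ^ 2 / 2)
    (hQ : ∀ z u : H, f₂ (Q z) / l₁ + ‖z - Q z‖ ^ 2 / 2 ≤ f₂ u / l₁ + ‖z - u‖ ^ 2 / 2)
    (hP₁ : ∀ z u : H, f₁ (P₁ z) + ‖z - P₁ z‖ ^ 2 / 2 ≤ f₁ u + ‖z - u‖ ^ 2 / 2)
    (hP₂ : ∀ z u : H, f₂ (P₂ z) + ‖z - P₂ z‖ ^ 2 / 2 ≤ f₂ u + ‖z - u‖ ^ 2 / 2) :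
    ∀ c : ℝ,
      ((∀ u v : H, c ≤ f₁ u / l₂ + f₂ v / l₁ + ‖u - v‖ ^ 2 / 2) ↔
        (∀ u : H, c ≤ f₁ u / l₂ + f₂ (Q u) / l₁ + ‖u - Q u‖ ^ 2 / 2)) ∧
      ((∀ u : H, c ≤ f₁ u / l₂ + f₂ (Q u) / l₁ + ‖u - Q u‖ ^ 2 / 2) ↔
        (∀ v : H, c ≤ f₁ (P v) / l₂ + ‖v - P v‖ ^ 2 / 2 + f₂ v / l₁)) ∧
      ((∀ v : H, c ≤ f₁ (P v) / l₂ + ‖v - P v‖ ^ 2 / 2 + f₂ v / l₁) ↔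
        (∀ z : H, l₁ * l₂ * c ≤
          l₁ * (f₁ (P₁ z) + ‖z - P₁ z‖ ^ 2 / 2) +
          l₂ * (f₂ (P₂ z) + ‖z - P₂ z‖ ^ 2 / 2))) := by
  intro c
  have hAB : (∀ u v : H, c ≤ f₁ u / l₂ + f₂ v / l₁ + ‖u - v‖ ^ 2 / 2) ↔
      (∀ u : H, c ≤ f₁ u / l₂ + f₂ (Q u) / l₁ + ‖u - Q u‖ ^ 2 / 2) := by
    constructor
    · intro h u; exact h u (Q u)
    · intro h u v
      have h1 := h u
      have h2 := hQ u v
      linarith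
  have hAC : (∀ u v : H, c ≤ f₁ u / l₂ + f₂ v / l₁ + ‖u - v‖ ^ 2 / 2) ↔
      (∀ v : H, c ≤ f₁ (P v) / l₂ + ‖v - P v‖ ^ 2 / 2 + f₂ v / l₁) := by
    constructor
    · intro h v
      have h1 := h (P v) v
      rw [norm_sub_rev] at h1
      linarith
    · intro h u v
      have h1 := h v
      have h2 := hP v u
      rw [norm_sub_rev v u] at h2
      linarith
  have hAD : (∀ u v : H, c ≤ f₁ u / l₂ + f₂ v / l₁ + ‖u - v‖ ^ 2 / 2) ↔
      (∀ z : H, l₁ * l₂ * c ≤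
        l₁ * (f₁ (P₁ z) + ‖z - P₁ z‖ ^ 2 / 2) +
        l₂ * (f₂ (P₂ z) + ‖z - P₂ z‖ ^ 2 / 2)) := by
    constructor
    · intro h z
      have h1 := h (P₁ z) (P₂ z)
      have h2 := key_ineq l₁ l₂ hl₁ hl₂ hl (z - P₁ z) (z - P₂ z)
      have h3 : (z - P₂ z) - (z - P₁ z) = P₁ z - P₂ z := by abel
      rw [h3] at h2
      have e1 : l₁ * l₂ * (f₁ (P₁ z) / l₂) = l₁ * f₁ (P₁ z) := by
        field_simp
      have e2 : l₁ * l₂ * (f₂ (P₂ z) / l₁) = l₂ * f₂ (P₂ z) := by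
        field_simp
      have h4 : l₁ * l₂ * c ≤ l₁ * l₂ *
          (f₁ (P₁ z) / l₂ + f₂ (P₂ z) / l₁ + ‖P₁ z - P₂ z‖ ^ 2 / 2) :=
        mul_le_mul_of_nonneg_left h1 (le_of_lt (mul_pos hl₁ hl₂))
      rw [mul_add, mul_add, e1, e2] at h4
      nlinarith
    · intro h u v
      have hz := h (l₁ • u + l₂ • v)
      have h1 := hP₁ (l₁ • u + l₂ • v) u
      have h2 := hP₂ (l₁ • u + l₂ • v) v
      have h3 := key_eq l₁ l₂ hl₁ hl₂ hl u v
      have e1 : l₁ * l₂ * (f₁ u / l₂) = l₁ * f₁ u := by field_simp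
      have e2 : l₁ * l₂ * (f₂ v / l₁) = l₂ * f₂ v := by field_simp
      have h4 : l₁ * l₂ * c ≤ l₁ * l₂ *
          (f₁ u / l₂ + f₂ v / l₁ + ‖u - v‖ ^ 2 / 2) := by
        rw [mul_add, mul_add, e1, e2]
        nlinarith [mul_le_mul_of_nonneg_left h1 (le_of_lt hl₁),
          mul_le_mul_of_nonneg_left h2 (le_of_lt hl₂)]
      exact le_of_mul_le_mul_left h4 (mul_pos hl₁ hl₂)
  exact ⟨hAB, hAB.symm.trans hAC, hAC.symm.trans hAD⟩
end

section
/- Let P = Prox_{f₁/λ₂}, Q = Prox_{f₂/λ₁}, P₁ = Prox_{f₁}, P₂ = Prox_{f₂} be proximal mappings (total functions H → H satisfying the proximal law). Define E := {x ∈ H : P (Q x) = x} and Fix := {z ∈ H : z = λ₁ • P₁ z + λ₂ • P₂ z}. Then the map T₁ : x ↦ λ₁ • x + λ₂ • Q x is a bijection from E onto Fix whose inverse is z ↦ P₁ z: for every x ∈ E, λ₁ • x + λ₂ • Q x ∈ Fix and P₁(λ₁ • x + λ₂ • Q x) = x, and for every z ∈ Fix, P₁ z ∈ E and λ₁ • P₁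 z + λ₂ • Q (P₁ z) = z. -/
open RealInnerProductSpace

/-- Subgradient inequality from the proximal (minimization) property. -/
lemma proxSubgrad {H : Type*} [NormedAddCommGroup H] [InnerProductSpace ℝ H]
    {f : H → ℝ} (hf : ConvexOn ℝ Set.univ f) {μ : ℝ} (hμ : 0 < μ) (w p : H)
    (hp : ∀ u, f p / μ + ‖w - p‖ ^ 2 / 2 ≤ f u / μ + ‖w - u‖ ^ 2 / 2)
    (u : H) : μ * ⟪w - p, u - p⟫ ≤ f u - f p := by
  have hμ0 : μ ≠ 0 := ne_of_gt hμ
  have hp' : ∀ v, f p + μ * (‖w - p‖ ^ 2 / 2) ≤ f v + μ * (‖w - v‖ ^ 2 / 2) := by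
    intro v
    have h := mul_le_mul_of_nonneg_left (hp v) hμ.le
    calc f p + μ * (‖w - p‖ ^ 2 / 2) = μ * (f p / μ + ‖w - p‖ ^ 2 / 2) := by
          field_simp
      _ ≤ μ * (f v / μ + ‖w - v‖ ^ 2 / 2) := h
      _ = f v + μ * (‖w - v‖ ^ 2 / 2) := by field_simp
  have key : ∀ t : ℝ, 0 < t → t ≤ 1 →
      μ * ⟪w - p, u - p⟫ ≤ f u - f p + t * (μ * ‖u - p‖ ^ 2 / 2) := by
    intro t ht ht1
    have hcv : f ((1 - t) • p + t • u) ≤ (1 - t) * f p + t * f u :=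
      hf.2 (Set.mem_univ p) (Set.mem_univ u) (by linarith) ht.le (by ring)
    have heq : w - ((1 - t) • p + t • u) = (w - p) - t • (u - p) := by module
    have hnorm : ‖w - ((1 - t) • p + t • u)‖ ^ 2
        = ‖w - p‖ ^ 2 - 2 * t * ⟪w - p, u - p⟫ + t ^ 2 * ‖u - p‖ ^ 2 := by
      rw [heq, norm_sub_sq_real, real_inner_smul_right, norm_smul]
      simp [abs_of_pos ht]
      ring
    have hpt := hp' ((1 - t) • p + t • u)
    rw [hnorm] at hpt
    have h2 : t * (μ * ⟪w - p, u - p⟫) ≤ t * (f u - f p + t * (μ * ‖u - p‖ ^ 2 / 2)) := by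
      nlinarith [hpt, hcv]
    exact le_of_mul_le_mul_left h2 ht
  refine le_of_forall_pos_le_add ?_
  intro ε hε
  set C := μ * ‖u - p‖ ^ 2 / 2 with hC
  have hC0 : 0 ≤ C := by positivity
  set t := min 1 (ε / (C + 1)) with htdef
  have ht : 0 < t := lt_min one_pos (div_pos hε (by linarith))
  have ht1 : t ≤ 1 := min_le_left _ _
  have htε : t * (C + 1) ≤ ε := by
    have h := min_le_right 1 (ε / (C + 1))
    calc t * (C + 1) ≤ (ε / (C + 1)) * (C + 1) :=
          mul_le_mul_of_nonneg_right h (by linarith)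
      _ = ε := by field_simp
  have := key t ht ht1
  nlinarith

/-- Two points satisfying the (scaled) subgradient inequality at the same
base point coincide. -/
lemma subgradUnique {H : Type*} [NormedAddCommGroup H] [InnerProductSpace ℝ H]
    {f : H → ℝ} {μ : ℝ} (hμ : 0 < μ) {w p p' : H}
    (hs : ∀ u, μ * ⟪w - p, u - p⟫ ≤ f u - f p)
    (hs' : ∀ u, μ * ⟪w - p', u - p'⟫ ≤ f u - f p') : p = p' := by
  have h1 := hs p'
  have h2 := hs' p
  have e : ⟪w - p, p' - p⟫ + ⟪w - p', p - p'⟫ = ‖p' - p‖ ^ 2 := by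
    have h3 : p - p' = -(p' - p) := by abel
    rw [h3, inner_neg_right, ← sub_eq_add_neg, ← inner_sub_left]
    have h4 : w - p - (w - p') = p' - p := by abel
    rw [h4, real_inner_self_eq_norm_sq]
  have h5 : μ * ‖p' - p‖ ^ 2 ≤ 0 := by rw [← e, mul_add]; linarith
  have h5' : ‖p' - p‖ ^ 2 ≤ 0 := nonpos_of_mul_nonpos_right h5 hμ
  have h6 : ‖p' - p‖ = 0 := by nlinarith [norm_nonneg (p' - p)]
  have := norm_sub_eq_zero_iff.mp h6
  exact this.symm

/-- The map `T₁ : x ↦ l₁ • x + l₂ • Q x` is a bijection from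
`E = Fix (Prox_{f₁/l₂} ∘ Prox_{f₂/l₁})` onto
`Fix (l₁ Prox_{f₁} + l₂ Prox_{f₂})` with inverse `z ↦ P₁ z`. -/
theorem prox_E_to_Fix_bijection
    {H : Type*} [NormedAddCommGroup H] [InnerProductSpace ℝ H]
    (l₁ l₂ : ℝ) (hl₁ : 0 < l₁) (hl₂ : 0 < l₂) (hl : l₁ + l₂ = 1)
    (f₁ f₂ : H → ℝ)
    (hf₁ : ConvexOn ℝ Set.univ f₁) (hf₂ : ConvexOn ℝ Set.univ f₂)
    (hf₁c : LowerSemicontinuous f₁) (hf₂c : LowerSemicontinuous f₂)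
    (P Q P₁ P₂ : H → H)
    (hP : ∀ z u : H, f₁ (P z) / l₂ + ‖z - P z‖ ^ 2 / 2 ≤ f₁ u / l₂ + ‖z - u‖ ^ 2 / 2)
    (hQ : ∀ z u : H, f₂ (Q z) / l₁ + ‖z - Q z‖ ^ 2 / 2 ≤ f₂ u / l₁ + ‖z - u‖ ^ 2 / 2)
    (hP₁ : ∀ z u : H, f₁ (P₁ z) + ‖z - P₁ z‖ ^ 2 / 2 ≤ f₁ u + ‖z - u‖ ^ 2 / 2)
    (hP₂ : ∀ z u : H, f₂ (P₂ z) + ‖z - P₂ z‖ ^ 2 / 2 ≤ f₂ u + ‖z - u‖ ^ 2 / 2) :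
    (∀ x ∈ {x : H | P (Q x) = x},
      (l₁ • x + l₂ • Q x) ∈ {z : H | z = l₁ • P₁ z + l₂ • P₂ z} ∧
      P₁ (l₁ • x + l₂ • Q x) = x) ∧
    (∀ z ∈ {z : H | z = l₁ • P₁ z + l₂ • P₂ z},
      P₁ z ∈ {x : H | P (Q x) = x} ∧ l₁ • P₁ z + l₂ • Q (P₁ z) = z) := by
  have hl₁eq : l₁ = 1 - l₂ := by linarith
  have hl₂eq : l₂ = 1 - l₁ := by linarith
  constructor
  · intro x hx
    simp only [Set.mem_setOf_eq] at hx ⊢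
    set y := Q x with hy
    set z := l₁ • x + l₂ • y with hzdef
    -- subgradient inequality for x = P y with parameter l₂
    have hsx : ∀ u, l₂ * ⟪y - x, u - x⟫ ≤ f₁ u - f₁ x := by
      have h := proxSubgrad hf₁ hl₂ y (P y) (hP y)
      rwa [show P y = x from hx] at h
    have hzx : z - x = l₂ • (y - x) := by rw [hzdef, hl₁eq]; module
    have hsx1 : ∀ u, (1 : ℝ) * ⟪z - x, u - x⟫ ≤ f₁ u - f₁ x := by
      intro u
      rw [one_mul, hzx, real_inner_smul_left]
      exact hsx u
    have hsP₁ : ∀ u, (1 : ℝ) * ⟪z - P₁ z, u - P₁ z⟫ ≤ f₁ u - f₁ (P₁ z) := by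
      have h := proxSubgrad hf₁ one_pos z (P₁ z) (fun u => by simpa using hP₁ z u)
      simpa using h
    have hP₁x : P₁ z = x := subgradUnique one_pos hsP₁ hsx1
    -- subgradient inequality for y = Q x with parameter l₁
    have hsy : ∀ u, l₁ * ⟪x - y, u - y⟫ ≤ f₂ u - f₂ y :=
      proxSubgrad hf₂ hl₁ x (Q x) (hQ x)
    have hzy : z - y = l₁ • (x - y) := by rw [hzdef, hl₂eq]; module
    have hsy1 : ∀ u, (1 : ℝ) * ⟪z - y, u - y⟫ ≤ f₂ u - f₂ y := by
      intro u
      rw [one_mul, hzy, real_inner_smul_left]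
      exact hsy u
    have hsP₂ : ∀ u, (1 : ℝ) * ⟪z - P₂ z, u - P₂ z⟫ ≤ f₂ u - f₂ (P₂ z) := by
      have h := proxSubgrad hf₂ one_pos z (P₂ z) (fun u => by simpa using hP₂ z u)
      simpa using h
    have hP₂y : P₂ z = y := subgradUnique one_pos hsP₂ hsy1
    exact ⟨by rw [hP₁x, hP₂y], hP₁x⟩
  · intro z hz
    simp only [Set.mem_setOf_eq] at hz ⊢
    set x := P₁ z with hxdef
    set y := P₂ z with hydef
    -- z = l₁ • x + l₂ • y
    have hsx : ∀ u, (1 : ℝ) * ⟪z - x, u - x⟫ ≤ f₁ u - f₁ x := by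
      have h := proxSubgrad hf₁ one_pos z (P₁ z) (fun u => by simpa using hP₁ z u)
      simpa using h
    have hzx : z - x = l₂ • (y - x) := by
      rw [hz, hl₁eq]; module
    have hsx2 : ∀ u, l₂ * ⟪y - x, u - x⟫ ≤ f₁ u - f₁ x := by
      intro u
      have h := hsx u
      rwa [one_mul, hzx, real_inner_smul_left] at h
    have hsPy : ∀ u, l₂ * ⟪y - P y, u - P y⟫ ≤ f₁ u - f₁ (P y) :=
      proxSubgrad hf₁ hl₂ y (P y) (hP y)
    have hPyx : P y = x := subgradUnique hl₂ hsPy hsx2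
    have hsy : ∀ u, (1 : ℝ) * ⟪z - y, u - y⟫ ≤ f₂ u - f₂ y := by
      have h := proxSubgrad hf₂ one_pos z (P₂ z) (fun u => by simpa using hP₂ z u)
      simpa using h
    have hzy : z - y = l₁ • (x - y) := by
      rw [hz, hl₂eq]; module
    have hsy2 : ∀ u, l₁ * ⟪x - y, u - y⟫ ≤ f₂ u - f₂ y := by
      intro u
      have h := hsy u
      rwa [one_mul, hzy, real_inner_smul_left] at h
    have hsQx : ∀ u, l₁ * ⟪x - Q x, u - Q x⟫ ≤ f₂ u - f₂ (Q x) :=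
      proxSubgrad hf₂ hl₁ x (Q x) (hQ x)
    have hQxy : Q x = y := subgradUnique hl₁ hsQx hsy2
    refine ⟨by rw [hQxy, hPyx], ?_⟩
    rw [hQxy]
    exact hz.symm
end

section
/- Let R₁ = Prox_{λ₂·f₁} and R₂ = Prox_{λ₁·f₂} be proximal mappings of the scaled functions λ₂·f₁ and λ₁·f₂ (total functions H → H satisfying the proximal law, with μ = 1, applied to λ₂·f₁ and λ₁·f₂ respectively). Then {z ∈ H : z = λ₁ • R₁ z + λ₂ • R₂ z} = {λ₁ • x + λ₂ • y : x, y ∈ H such that f₁(x) + ‖y − x‖²/2 ≤ f₁(u) + ‖y − u‖²/2 for all u ∈ H, and f₂(y) + ‖x − y‖²/2 ≤ f₂(v) + ‖x − v‖²/2 for all v ∈ H} (i.e., Fix(λ₁ Prox_{λ₂ f₁} + λ₂ Prox_{λ₁ f₂}) consists exactly of the averages λ₁ x + λ₂ y over pairs with x = Prox_{f₁} y and y = Prox_{f₂} x). -/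
open RealInnerProductSpace

section Aux
variable {H : Type*} [NormedAddCommGroup H] [InnerProductSpace ℝ H]

lemma VI_to_min_aux (f : H → ℝ) (z p : H)
    (h : ∀ u, ⟪z - p, u - p⟫ ≤ f u - f p) :
    ∀ u, f p + ‖z - p‖ ^ 2 / 2 ≤ f u + ‖z - u‖ ^ 2 / 2 := by
  intro u
  have hzu : z - u = (z - p) - (u - p) := by abel
  have hexp : ‖z - u‖ ^ 2 = ‖z - p‖ ^ 2 - 2 * ⟪z - p, u - p⟫ + ‖u - p‖ ^ 2 := by
    rw [hzu, norm_sub_sq_real]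
  have := h u
  nlinarith [sq_nonneg ‖u - p‖]

lemma min_to_VI_aux (f : H → ℝ) (hf : ConvexOn ℝ Set.univ f) (z p : H)
    (hp : ∀ u, f p + ‖z - p‖ ^ 2 / 2 ≤ f u + ‖z - u‖ ^ 2 / 2) :
    ∀ u, ⟪z - p, u - p⟫ ≤ f u - f p := by
  intro u
  by_contra hcon
  push_neg at hcon
  set I := ⟪z - p, u - p⟫ with hI
  set ε := I - (f u - f p) with hε
  have hεpos : 0 < ε := by simp only [hε]; linarith
  have hden : 0 < ‖u - p‖ ^ 2 / 2 + 1 := by positivity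
  set t := min 1 (ε / (‖u - p‖ ^ 2 / 2 + 1)) with ht
  have ht0 : 0 < t := lt_min one_pos (div_pos hεpos hden)
  have ht1 : t ≤ 1 := min_le_left _ _
  have hkey : t * (‖u - p‖ ^ 2 / 2) < ε := by
    calc t * (‖u - p‖ ^ 2 / 2)
        ≤ (ε / (‖u - p‖ ^ 2 / 2 + 1)) * (‖u - p‖ ^ 2 / 2) :=
          mul_le_mul_of_nonneg_right (min_le_right _ _) (by positivity)
      _ < ε := by
          rw [div_mul_eq_mul_div, div_lt_iff₀ hden]
          nlinarith
  set q := (1 - t) • p + t • u with hq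
  have hconv : f q ≤ (1 - t) * f p + t * f u :=
    hf.2 (Set.mem_univ p) (Set.mem_univ u) (by linarith) ht0.le (by ring)
  have hmin := hp q
  have hzq : z - q = (z - p) - t • (u - p) := by
    rw [hq]; module
  have hnorm : ‖z - q‖ ^ 2
      = ‖z - p‖ ^ 2 - 2 * (t * I) + t ^ 2 * ‖u - p‖ ^ 2 := by
    rw [hzq, norm_sub_sq_real, real_inner_smul_right, norm_smul,
      mul_pow, Real.norm_eq_abs, sq_abs]
  have hstep : t ^ 2 * (‖u - p‖ ^ 2) < 2 * (t * ε) := by nlinarith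
  nlinarith

lemma VI_unique_aux (f : H → ℝ) (z p q : H)
    (hp : ∀ u, ⟪z - p, u - p⟫ ≤ f u - f p)
    (hq : ∀ u, ⟪z - q, u - q⟫ ≤ f u - f q) : p = q := by
  have h1 := hp q
  have h2 := hq p
  have e : ⟪z - p, q - p⟫ - ⟪z - q, q - p⟫ = ‖q - p‖ ^ 2 := by
    rw [← inner_sub_left]
    have : (z - p) - (z - q) = q - p := by abel
    rw [this, real_inner_self_eq_norm_sq]
  have h2' : - ⟪z - q, q - p⟫ ≤ f p - f q := by
    have : p - q = -(q - p) := by abel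
    rw [this, inner_neg_right] at h2
    exact h2
  have hn : ‖q - p‖ ^ 2 ≤ 0 := by linarith
  have : q - p = 0 := by
    have := sq_nonneg ‖q - p‖
    have : ‖q - p‖ = 0 := by nlinarith
    simpa [norm_eq_zero] using this
  symm
  rwa [sub_eq_zero] at this

end Aux

/-- `Fix (l₁ Prox_{l₂ f₁} + l₂ Prox_{l₁ f₂})` consists exactly of the averages
`l₁ x + l₂ y` over pairs with `x = Prox_{f₁} y` and `y = Prox_{f₂} x`. -/
theorem Fix_scaled_prox_average_eq_averages_of_alternating_pairs
    {H : Type*} [NormedAddCommGroup H] [InnerProductSpace ℝ H]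
    (l₁ l₂ : ℝ) (hl₁ : 0 < l₁) (hl₂ : 0 < l₂) (hl : l₁ + l₂ = 1)
    (f₁ f₂ : H → ℝ)
    (hf₁ : ConvexOn ℝ Set.univ f₁) (hf₂ : ConvexOn ℝ Set.univ f₂)
    (hf₁c : LowerSemicontinuous f₁) (hf₂c : LowerSemicontinuous f₂)
    (R₁ R₂ : H → H)
    (hR₁ : ∀ z u : H,
      l₂ * f₁ (R₁ z) + ‖z - R₁ z‖ ^ 2 / 2 ≤ l₂ * f₁ u + ‖z - u‖ ^ 2 / 2)
    (hR₂ : ∀ z u : H,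
      l₁ * f₂ (R₂ z) + ‖z - R₂ z‖ ^ 2 / 2 ≤ l₁ * f₂ u + ‖z - u‖ ^ 2 / 2) :
    {z : H | z = l₁ • R₁ z + l₂ • R₂ z} =
      {w : H | ∃ x y : H,
        (∀ u : H, f₁ x + ‖y - x‖ ^ 2 / 2 ≤ f₁ u + ‖y - u‖ ^ 2 / 2) ∧
        (∀ v : H, f₂ y + ‖x - y‖ ^ 2 / 2 ≤ f₂ v + ‖x - v‖ ^ 2 / 2) ∧
        w = l₁ • x + l₂ • y} := by
  -- convexity of the scaled functions
  have hg₁ : ConvexOn ℝ Set.univ (fun u => l₂ * f₁ u) := by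
    simpa [Pi.smul_apply, smul_eq_mul] using hf₁.smul hl₂.le
  have hg₂ : ConvexOn ℝ Set.univ (fun u => l₁ * f₂ u) := by
    simpa [Pi.smul_apply, smul_eq_mul] using hf₂.smul hl₁.le
  ext z
  simp only [Set.mem_setOf_eq]
  constructor
  · intro hz
    set x := R₁ z with hx
    set y := R₂ z with hy
    have hzx : z - x = l₂ • (y - x) := by
      rw [hz, hx, hy]
      have : l₁ = 1 - l₂ := by linarith
      rw [this]; module
    have hzy : z - y = l₁ • (x - y) := by
      rw [hz, hx, hy]
      have : l₂ = 1 - l₁ := by linarith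
      rw [this]; module
    have VI₁ := min_to_VI_aux (fun u => l₂ * f₁ u) hg₁ z x (hR₁ z)
    have VI₂ := min_to_VI_aux (fun u => l₁ * f₂ u) hg₂ z y (hR₂ z)
    have VI₁' : ∀ u, ⟪y - x, u - x⟫ ≤ f₁ u - f₁ x := by
      intro u
      have := VI₁ u
      rw [hzx, real_inner_smul_left] at this
      have h := (mul_le_mul_iff_right₀ hl₂).mp (by linarith : l₂ * ⟪y - x, u - x⟫ ≤ l₂ * (f₁ u - f₁ x))
      exact h
    have VI₂' : ∀ u, ⟪x - y, u - y⟫ ≤ f₂ u - f₂ y := by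
      intro u
      have := VI₂ u
      rw [hzy, real_inner_smul_left] at this
      exact (mul_le_mul_iff_right₀ hl₁).mp (by linarith : l₁ * ⟪x - y, u - y⟫ ≤ l₁ * (f₂ u - f₂ y))
    exact ⟨x, y, VI_to_min_aux f₁ y x VI₁', VI_to_min_aux f₂ x y VI₂', hz⟩
  · rintro ⟨x, y, h1, h2, rfl⟩
    set w := l₁ • x + l₂ • y with hw
    have hwx : w - x = l₂ • (y - x) := by
      rw [hw]
      have : l₁ = 1 - l₂ := by linarith
      rw [this]; module
    have hwy : w - y = l₁ • (x - y) := by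
      rw [hw]
      have : l₂ = 1 - l₁ := by linarith
      rw [this]; module
    -- x satisfies the VI for l₂ f₁ at w
    have VIx : ∀ u, ⟪w - x, u - x⟫ ≤ (fun u => l₂ * f₁ u) u - (fun u => l₂ * f₁ u) x := by
      intro u
      have := min_to_VI_aux f₁ hf₁ y x h1 u
      rw [hwx, real_inner_smul_left]
      simp only
      nlinarith
    have VIy : ∀ u, ⟪w - y, u - y⟫ ≤ (fun u => l₁ * f₂ u) u - (fun u => l₁ * f₂ u) y := by
      intro u
      have := min_to_VI_aux f₂ hf₂ x y h2 u
      rw [hwy, real_inner_smul_left]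
      simp only
      nlinarith
    have VIR₁ := min_to_VI_aux (fun u => l₂ * f₁ u) hg₁ w (R₁ w) (hR₁ w)
    have VIR₂ := min_to_VI_aux (fun u => l₁ * f₂ u) hg₂ w (R₂ w) (hR₂ w)
    have hx : R₁ w = x := VI_unique_aux (fun u => l₂ * f₁ u) w (R₁ w) x VIR₁ VIx
    have hy : R₂ w = y := VI_unique_aux (fun u => l₁ * f₂ u) w (R₂ w) y VIR₂ VIy
    rw [hx, hy]
end

section
/- Let P₁, P₂ : H → H be projections onto C₁ and C₂ respectively. Then for every z ∈ H, z = λ₁ • P₁ z + λ₂ • P₂ z if and only if z minimizes w ↦ λ₁·(infDist w C₁)²/2 + λ₂·(infDist w C₂)²/2 over H, i.e., λ₁·(infDist z C₁)² + λ₂·(infDist z C₂)² ≤ λ₁·(infDist w C₁)² + λ₂·(infDist w C₂)² for all w ∈ H. In other words, Fix(λ₁ P_{C₁} + λ₂ P_{C₂}) is exactly the set of least-squares solutions argmin(λ₁ d²_{C₁}/2 + λ₂ d²_{C₂}/2). -/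
open Metric RealInnerProductSpace

section Aux

variable {H : Type*} [NormedAddCommGroup H] [InnerProductSpace ℝ H]

lemma infDist_eq_norm_sub_proj {C : Set H} {P : H → H}
    (hP : ∀ x : H, P x ∈ C ∧ ∀ y ∈ C, ‖x - P x‖ ≤ ‖x - y‖) (x : H) :
    infDist x C = ‖x - P x‖ := by
  refine le_antisymm ?_ ?_
  · simpa [dist_eq_norm] using infDist_le_dist_of_mem (hP x).1
  · haveI : Nonempty C := ⟨⟨P x, (hP x).1⟩⟩
    rw [infDist_eq_iInf]
    refine le_ciInf fun y => ?_
    simpa [dist_eq_norm] using (hP x).2 y y.2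

lemma proj_inner_le_zero {C : Set H} (hC : Convex ℝ C) {P : H → H}
    (hP : ∀ x : H, P x ∈ C ∧ ∀ y ∈ C, ‖x - P x‖ ≤ ‖x - y‖) (x : H)
    {y : H} (hy : y ∈ C) : ⟪x - P x, y - P x⟫ ≤ 0 := by
  have hmem := (hP x).1
  haveI : Nonempty C := ⟨⟨P x, hmem⟩⟩
  have hnorm : ‖x - P x‖ = ⨅ w : C, ‖x - w‖ := by
    refine le_antisymm ?_ ?_
    · exact le_ciInf fun w => (hP x).2 w w.2
    · exact ciInf_le ⟨0, fun _ ⟨_, h⟩ => h ▸ norm_nonneg _⟩ (⟨P x, hmem⟩ : C)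
  exact (norm_eq_iInf_iff_real_inner_le_zero hC hmem).1 hnorm y hy

/-- Subgradient inequality for the squared distance. -/
lemma sq_infDist_subgrad {C : Set H} (hC : Convex ℝ C) {P : H → H}
    (hP : ∀ x : H, P x ∈ C ∧ ∀ y ∈ C, ‖x - P x‖ ≤ ‖x - y‖) (z w : H) :
    (infDist z C) ^ 2 + 2 * ⟪z - P z, w - z⟫ ≤ (infDist w C) ^ 2 := by
  rw [infDist_eq_norm_sub_proj hP, infDist_eq_norm_sub_proj hP]
  set a := z - P z
  set b := w - P w
  have h1 : ‖a‖ ^ 2 + 2 * ⟪a, b - a⟫ ≤ ‖b‖ ^ 2 := by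
    have h := sq_nonneg ‖b - a‖
    rw [← real_inner_self_eq_norm_sq] at h ⊢
    rw [← real_inner_self_eq_norm_sq]
    have : ⟪b - a, b - a⟫ = ⟪b, b⟫ - 2 * ⟪a, b⟫ + ⟪a, a⟫ := by
      simp only [inner_sub_left, inner_sub_right, real_inner_comm a b]; ring
    rw [this] at h
    simp only [inner_sub_right]
    linarith
  have h2 : ⟪a, P w - P z⟫ ≤ 0 :=
    proj_inner_le_zero hC hP z (hP w).1
  have hbd : b - a = (w - z) - (P w - P z) := by
    simp only [a, b]; abel
  have h3 : ⟪a, b - a⟫ = ⟪a, w - z⟫ - ⟪a, P w - P z⟫ := by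
    rw [hbd, inner_sub_right]
  linarith

end Aux

/-- `Fix (l₁ P_{C₁} + l₂ P_{C₂})` is exactly the set of least-squares solutions
`argmin (l₁ d²_{C₁}/2 + l₂ d²_{C₂}/2)`. -/
theorem Fix_averaged_projections_eq_least_squares
    {H : Type*} [NormedAddCommGroup H] [InnerProductSpace ℝ H]
    (l₁ l₂ : ℝ) (hl₁ : 0 < l₁) (hl₂ : 0 < l₂) (hl : l₁ + l₂ = 1)
    (C₁ C₂ : Set H) (hC₁ : C₁.Nonempty) (hC₂ : C₂.Nonempty)
    (hC₁conv : Convex ℝ C₁) (hC₂conv : Convex ℝ C₂)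
    (P₁ P₂ : H → H)
    (hP₁ : ∀ x : H, P₁ x ∈ C₁ ∧ ∀ y ∈ C₁, ‖x - P₁ x‖ ≤ ‖x - y‖)
    (hP₂ : ∀ x : H, P₂ x ∈ C₂ ∧ ∀ y ∈ C₂, ‖x - P₂ x‖ ≤ ‖x - y‖) :
    ∀ z : H,
      z = l₁ • P₁ z + l₂ • P₂ z ↔
        ∀ w : H,
          l₁ * (Metric.infDist z C₁) ^ 2 + l₂ * (Metric.infDist z C₂) ^ 2 ≤
            l₁ * (Metric.infDist w C₁) ^ 2 + l₂ * (Metric.infDist w C₂) ^ 2 := by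
  intro z
  constructor
  · intro hz w
    have h1 := sq_infDist_subgrad hC₁conv hP₁ z w
    have h2 := sq_infDist_subgrad hC₂conv hP₂ z w
    have hsum : l₁ * ⟪z - P₁ z, w - z⟫ + l₂ * ⟪z - P₂ z, w - z⟫ = 0 := by
      have : l₁ * ⟪z - P₁ z, w - z⟫ + l₂ * ⟪z - P₂ z, w - z⟫
          = ⟪l₁ • (z - P₁ z) + l₂ • (z - P₂ z), w - z⟫ := by
        rw [inner_add_left, real_inner_smul_left, real_inner_smul_left]
      rw [this]
      have hv : l₁ • (z - P₁ z) + l₂ • (z - P₂ z) = 0 := by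
        have : l₁ • (z - P₁ z) + l₂ • (z - P₂ z)
            = (l₁ + l₂) • z - (l₁ • P₁ z + l₂ • P₂ z) := by
          rw [smul_sub, smul_sub, add_smul]; abel
        rw [this, hl, one_smul, ← hz, sub_self]
      rw [hv, inner_zero_left]
    nlinarith [h1, h2, hl₁.le, hl₂.le]
  · intro hmin
    set u := z - (l₁ • P₁ z + l₂ • P₂ z) with hu
    have key : l₁ * (infDist (l₁ • P₁ z + l₂ • P₂ z) C₁) ^ 2
        + l₂ * (infDist (l₁ • P₁ z + l₂ • P₂ z) C₂) ^ 2
        ≤ l₁ * (infDist z C₁) ^ 2 + l₂ * (infDist z C₂) ^ 2 - ‖u‖ ^ 2 := by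
      set T := l₁ • P₁ z + l₂ • P₂ z
      have d1 : infDist T C₁ ≤ ‖T - P₁ z‖ := by
        simpa [dist_eq_norm] using infDist_le_dist_of_mem (s := C₁) (x := T) (hP₁ z).1
      have d2 : infDist T C₂ ≤ ‖T - P₂ z‖ := by
        simpa [dist_eq_norm] using infDist_le_dist_of_mem (s := C₂) (x := T) (hP₂ z).1
      set a := z - P₁ z
      set b := z - P₂ z
      have ha : T - P₁ z = a - u := by simp only [T, a, u]; abel
      have hb : T - P₂ z = b - u := by simp only [T, b, u]; abel
      have hab : l₁ • a + l₂ • b = u := by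
        simp only [a, b, u, smul_sub]
        rw [show l₁ • z - l₁ • P₁ z + (l₂ • z - l₂ • P₂ z)
            = (l₁ + l₂) • z - (l₁ • P₁ z + l₂ • P₂ z) by rw [add_smul]; abel, hl, one_smul]
      have e1 : ‖a - u‖ ^ 2 = ‖a‖ ^ 2 - 2 * ⟪a, u⟫ + ‖u‖ ^ 2 := by
        rw [← real_inner_self_eq_norm_sq, ← real_inner_self_eq_norm_sq,
          ← real_inner_self_eq_norm_sq]
        simp only [inner_sub_left, inner_sub_right, real_inner_comm a u]; ring
      have e2 : ‖b - u‖ ^ 2 = ‖b‖ ^ 2 - 2 * ⟪b, u⟫ + ‖u‖ ^ 2 := by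
        rw [← real_inner_self_eq_norm_sq, ← real_inner_self_eq_norm_sq,
          ← real_inner_self_eq_norm_sq]
        simp only [inner_sub_left, inner_sub_right, real_inner_comm b u]; ring
      have einner : l₁ * ⟪a, u⟫ + l₂ * ⟪b, u⟫ = ‖u‖ ^ 2 := by
        rw [← real_inner_smul_left, ← real_inner_smul_left, ← inner_add_left, hab,
          real_inner_self_eq_norm_sq]
      have hz1 : infDist z C₁ = ‖a‖ := infDist_eq_norm_sub_proj hP₁ z
      have hz2 : infDist z C₂ = ‖b‖ := infDist_eq_norm_sub_proj hP₂ z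
      have s1 : (infDist T C₁) ^ 2 ≤ ‖a - u‖ ^ 2 := by
        rw [← ha]; exact pow_le_pow_left₀ infDist_nonneg d1 2
      have s2 : (infDist T C₂) ^ 2 ≤ ‖b - u‖ ^ 2 := by
        rw [← hb]; exact pow_le_pow_left₀ infDist_nonneg d2 2
      have : l₁ * (infDist T C₁) ^ 2 + l₂ * (infDist T C₂) ^ 2
          ≤ l₁ * ‖a - u‖ ^ 2 + l₂ * ‖b - u‖ ^ 2 := by
        have := mul_le_mul_of_nonneg_left s1 hl₁.le
        have := mul_le_mul_of_nonneg_left s2 hl₂.le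
        linarith
      rw [hz1, hz2]
      calc l₁ * (infDist T C₁) ^ 2 + l₂ * (infDist T C₂) ^ 2
          ≤ l₁ * ‖a - u‖ ^ 2 + l₂ * ‖b - u‖ ^ 2 := this
        _ = l₁ * ‖a‖ ^ 2 + l₂ * ‖b‖ ^ 2
            - 2 * (l₁ * ⟪a, u⟫ + l₂ * ⟪b, u⟫) + (l₁ + l₂) * ‖u‖ ^ 2 := by
            rw [e1, e2]; ring
        _ = l₁ * ‖a‖ ^ 2 + l₂ * ‖b‖ ^ 2 - ‖u‖ ^ 2 := by rw [einner, hl]; ring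
    have hle := hmin (l₁ • P₁ z + l₂ • P₂ z)
    have : ‖u‖ ^ 2 ≤ 0 := by linarith
    have hu0 : u = 0 := by
      have := sq_nonneg ‖u‖
      have hnorm : ‖u‖ = 0 := by nlinarith
      simpa using hnorm
    rw [hu, sub_eq_zero] at hu0
    exact hu0
end

section
/- Let P₁, P₂ : H → H be projections onto C₁ and C₂ respectively, and assume C₁ ∩ C₂ ≠ ∅. Then {z ∈ H : z = λ₁ • P₁ z + λ₂ • P₂ z} = {x ∈ H : P₁ (P₂ x) = x} = {y ∈ H : P₂ (P₁ y) = y} = C₁ ∩ C₂. -/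
open RealInnerProductSpace

lemma proj_var_ineq {H : Type*} [NormedAddCommGroup H] [InnerProductSpace ℝ H]
    {C : Set H} (hconv : Convex ℝ C) {P : H → H}
    (hP : ∀ x : H, P x ∈ C ∧ ∀ y ∈ C, ‖x - P x‖ ≤ ‖x - y‖)
    (x : H) : ∀ w ∈ C, ⟪x - P x, w - P x⟫ ≤ 0 := by
  have heq : ‖x - P x‖ = ⨅ w : C, ‖x - w‖ := by
    haveI : Nonempty C := ⟨⟨P x, (hP x).1⟩⟩
    refine le_antisymm (le_ciInf fun w => (hP x).2 w w.2) ?_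
    have hbdd : BddBelow (Set.range fun w : C => ‖x - w‖) := by
      refine ⟨0, ?_⟩
      rintro a ⟨v, rfl⟩
      exact norm_nonneg _
    exact ciInf_le hbdd ⟨P x, (hP x).1⟩
  exact (norm_eq_iInf_iff_real_inner_le_zero hconv (hP x).1).mp heq

lemma proj_fixed {H : Type*} [NormedAddCommGroup H] [InnerProductSpace ℝ H]
    {C : Set H} {P : H → H}
    (hP : ∀ x : H, P x ∈ C ∧ ∀ y ∈ C, ‖x - P x‖ ≤ ‖x - y‖)
    {x : H} (hx : x ∈ C) : P x = x := by
  have h := (hP x).2 x hx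
  simp only [sub_self, norm_zero] at h
  have : ‖x - P x‖ = 0 := le_antisymm h (norm_nonneg _)
  rw [norm_sub_eq_zero_iff] at this
  exact this.symm

/-- If `C₁ ∩ C₂ ≠ ∅`, then the fixed points of the averaged projection and of both
projection compositions all equal `C₁ ∩ C₂`. -/
theorem projection_fixed_point_sets_eq_intersection
    {H : Type*} [NormedAddCommGroup H] [InnerProductSpace ℝ H]
    (l₁ l₂ : ℝ) (hl₁ : 0 < l₁) (hl₂ : 0 < l₂) (hl : l₁ + l₂ = 1)
    (C₁ C₂ : Set H) (hC₁ : C₁.Nonempty) (hC₂ : C₂.Nonempty)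
    (hC₁conv : Convex ℝ C₁) (hC₂conv : Convex ℝ C₂)
    (hinter : (C₁ ∩ C₂).Nonempty)
    (P₁ P₂ : H → H)
    (hP₁ : ∀ x : H, P₁ x ∈ C₁ ∧ ∀ y ∈ C₁, ‖x - P₁ x‖ ≤ ‖x - y‖)
    (hP₂ : ∀ x : H, P₂ x ∈ C₂ ∧ ∀ y ∈ C₂, ‖x - P₂ x‖ ≤ ‖x - y‖) :
    {z : H | z = l₁ • P₁ z + l₂ • P₂ z} = {x : H | P₁ (P₂ x) = x} ∧
    {x : H | P₁ (P₂ x) = x} = {y : H | P₂ (P₁ y) = y} ∧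
    {y : H | P₂ (P₁ y) = y} = C₁ ∩ C₂ := by
  obtain ⟨w, hw₁, hw₂⟩ := hinter
  -- Each of the three sets equals C₁ ∩ C₂.
  have hA : {z : H | z = l₁ • P₁ z + l₂ • P₂ z} = C₁ ∩ C₂ := by
    ext z
    simp only [Set.mem_setOf_eq, Set.mem_inter_iff]
    constructor
    · intro hz
      have v1 : ⟪z - P₁ z, w - P₁ z⟫ ≤ 0 := proj_var_ineq hC₁conv hP₁ z w hw₁
      have v2 : ⟪z - P₂ z, w - P₂ z⟫ ≤ 0 := proj_var_ineq hC₂conv hP₂ z w hw₂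
      have hl₁' : l₁ = 1 - l₂ := by linarith
      have e1 : z - P₁ z = l₂ • (P₂ z - P₁ z) := by
        nth_rewrite 1 [hz]; rw [hl₁']; module
      have e2 : z - P₂ z = l₁ • (P₁ z - P₂ z) := by
        nth_rewrite 1 [hz]; rw [hl₁']; module
      set d := P₁ z - P₂ z with hd
      have v1' : l₂ * ⟪-d, w - P₁ z⟫ ≤ 0 := by
        rw [← real_inner_smul_left]
        have hsd : l₂ • -d = z - P₁ z := by rw [e1, hd, neg_sub]
        rw [hsd]; exact v1
      have v2' : l₁ * ⟪d, w - P₂ z⟫ ≤ 0 := by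
        rw [← real_inner_smul_left, ← e2]; exact v2
      have h1 : ⟪d, w - P₁ z⟫ ≥ 0 := by
        rw [inner_neg_left] at v1'
        nlinarith
      have h2 : ⟪d, w - P₂ z⟫ ≤ 0 := by nlinarith
      have hdd : ‖d‖ ^ 2 ≤ 0 := by
        have : ⟪d, w - P₁ z⟫ - ⟪d, w - P₂ z⟫ = -‖d‖ ^ 2 := by
          rw [← inner_sub_right]
          have : w - P₁ z - (w - P₂ z) = -d := by rw [hd]; abel
          rw [this, inner_neg_right, real_inner_self_eq_norm_sq]
        nlinarith
      have hd0 : d = 0 := by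
        have : ‖d‖ = 0 := by nlinarith [norm_nonneg d, sq_nonneg ‖d‖]
        exact norm_eq_zero.mp this
      have hP12 : P₁ z = P₂ z := sub_eq_zero.mp hd0
      have hzP : z = P₁ z := by
        nth_rewrite 1 [hz]
        rw [hP12, ← add_smul, hl, one_smul]
      constructor
      · have := (hP₁ z).1; rwa [← hzP] at this
      · have := (hP₂ z).1; rw [← hP12] at this; rwa [← hzP] at this
    · rintro ⟨h1, h2⟩
      rw [proj_fixed hP₁ h1, proj_fixed hP₂ h2, ← add_smul, hl, one_smul]
  have key : ∀ (Q₁ Q₂ : H → H) (D₁ D₂ : Set H), Convex ℝ D₁ → Convex ℝ D₂ →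
      (∀ x : H, Q₁ x ∈ D₁ ∧ ∀ y ∈ D₁, ‖x - Q₁ x‖ ≤ ‖x - y‖) →
      (∀ x : H, Q₂ x ∈ D₂ ∧ ∀ y ∈ D₂, ‖x - Q₂ x‖ ≤ ‖x - y‖) →
      w ∈ D₁ → w ∈ D₂ →
      {x : H | Q₁ (Q₂ x) = x} = D₁ ∩ D₂ := by
    intro Q₁ Q₂ D₁ D₂ hD₁ hD₂ hQ₁ hQ₂ hw1 hw2
    ext x
    simp only [Set.mem_setOf_eq, Set.mem_inter_iff]
    constructor
    · intro hx
      have v1 : ⟪Q₂ x - x, w - x⟫ ≤ 0 := by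
        have := proj_var_ineq hD₁ hQ₁ (Q₂ x) w hw1
        rwa [hx] at this
      have v2 : ⟪x - Q₂ x, w - Q₂ x⟫ ≤ 0 := proj_var_ineq hD₂ hQ₂ x w hw2
      have hsum : ‖x - Q₂ x‖ ^ 2 ≤ 0 := by
        have e : ⟪x - Q₂ x, w - Q₂ x⟫ + ⟪Q₂ x - x, w - x⟫ = ‖x - Q₂ x‖ ^ 2 := by
          have : ⟪Q₂ x - x, w - x⟫ = -⟪x - Q₂ x, w - x⟫ := by
            rw [← inner_neg_left, neg_sub]
          rw [this, ← sub_eq_add_neg, ← inner_sub_right]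
          have : w - Q₂ x - (w - x) = x - Q₂ x := by abel
          rw [this, real_inner_self_eq_norm_sq]
        linarith
      have : x - Q₂ x = 0 := by
        have : ‖x - Q₂ x‖ = 0 := by nlinarith [norm_nonneg (x - Q₂ x), sq_nonneg ‖x - Q₂ x‖]
        exact norm_eq_zero.mp this
      have hxQ : Q₂ x = x := (sub_eq_zero.mp this).symm
      constructor
      · rw [← hx]; exact (hQ₁ (Q₂ x)).1
      · rw [← hxQ]; exact (hQ₂ x).1
    · rintro ⟨h1, h2⟩
      rw [proj_fixed hQ₂ h2, proj_fixed hQ₁ h1]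
  have hB := key P₁ P₂ C₁ C₂ hC₁conv hC₂conv hP₁ hP₂ hw₁ hw₂
  have hC := key P₂ P₁ C₂ C₁ hC₂conv hC₁conv hP₂ hP₁ hw₂ hw₁
  rw [Set.inter_comm] at hC
  exact ⟨hA.trans hB.symm, hB.trans hC.symm, hC⟩
end

section
/- Let H be a complete real Hilbert space, let A₁, A₂ ⊆ H × H be monotone operators with resolvents J₁ = J_{A₁}, J₂ = J_{A₂} (total functions H → H), and assume Fix J_A ≠ ∅. Let x : ℕ → H be any sequence satisfying x(n+1) = λ₁ • J₁ (x n) + λ₂ • J₂ (x n) for all n ∈ ℕ. Then there exists x̄ ∈ Fix J_A such that x n converges weakly to x̄, i.e., for every φ ∈ H the real sequence n ↦ ⟪x n, φ⟫ tends to ⟪x̄, φ⟫ as n → ∞. -/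
open scoped RealInnerProductSpace
open Filter

section Aux

variable {H : Type*} [NormedAddCommGroup H] [InnerProductSpace ℝ H] [CompleteSpace H]

/-- Every bounded real sequence has a limit along an ultrafilter. -/
lemma aux_ultrafilter_limit (U : Ultrafilter ℕ) (a : ℕ → ℝ) (C : ℝ)
    (h : ∀ n, |a n| ≤ C) : ∃ c, |c| ≤ C ∧ Tendsto a (↑U) (nhds c) := by
  have hmem : (↑(U.map a) : Filter ℝ) ≤ Filter.principal (Set.Icc (-C) C) := by
    refine Filter.le_principal_iff.2 ?_
    have : ∀ n, a n ∈ Set.Icc (-C) C := fun n => abs_le.1 (h n)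
    exact Filter.mem_map.2 (Filter.univ_mem' this)
  obtain ⟨c, hc, hle⟩ := (isCompact_Icc (a := -C) (b := C)).ultrafilter_le_nhds (U.map a) hmem
  exact ⟨c, abs_le.2 hc, hle⟩

/-- A bounded sequence in a Hilbert space has a weak limit along any ultrafilter. -/
lemma aux_weak_limit (U : Ultrafilter ℕ) (x : ℕ → H) (B : ℝ)
    (hB : ∀ n, ‖x n‖ ≤ B) :
    ∃ xbar : H, ∀ y : H, Tendsto (fun n => ⟪x n, y⟫) (↑U) (nhds ⟪xbar, y⟫) := by
  have hBnn : 0 ≤ B := le_trans (norm_nonneg _) (hB 0)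
  have ex : ∀ y : H, ∃ c, |c| ≤ B * ‖y‖ ∧
      Tendsto (fun n => ⟪x n, y⟫) (↑U) (nhds c) := by
    intro y
    refine aux_ultrafilter_limit U _ (B * ‖y‖) (fun n => ?_)
    calc |⟪x n, y⟫| ≤ ‖x n‖ * ‖y‖ := abs_real_inner_le_norm _ _
      _ ≤ B * ‖y‖ := mul_le_mul_of_nonneg_right (hB n) (norm_nonneg _)
  classical
  let c : H → ℝ := fun y => (ex y).choose
  have hc : ∀ y, Tendsto (fun n => ⟪x n, y⟫) (↑U) (nhds (c y)) := fun y => (ex y).choose_spec.2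
  have hcb : ∀ y, |c y| ≤ B * ‖y‖ := fun y => (ex y).choose_spec.1
  have hadd : ∀ y z, c (y + z) = c y + c z := by
    intro y z
    have h1 : Tendsto (fun n => ⟪x n, y + z⟫) (↑U) (nhds (c y + c z)) := by
      have := (hc y).add (hc z)
      simpa [inner_add_right] using this
    exact tendsto_nhds_unique (hc (y + z)) h1
  have hsmul : ∀ (r : ℝ) (y : H), c (r • y) = r * c y := by
    intro r y
    have h1 : Tendsto (fun n => ⟪x n, r • y⟫) (↑U) (nhds (r * c y)) := by
      have := (hc y).const_mul r
      simpa [inner_smul_right] using this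
    exact tendsto_nhds_unique (hc (r • y)) h1
  let F : H →ₗ[ℝ] ℝ :=
    { toFun := c, map_add' := hadd, map_smul' := hsmul }
  let Fc : H →L[ℝ] ℝ := F.mkContinuous B (fun y => by
    simpa [F, Real.norm_eq_abs] using hcb y)
  refine ⟨(InnerProductSpace.toDual ℝ H).symm Fc, fun y => ?_⟩
  have hxb : ⟪(InnerProductSpace.toDual ℝ H).symm Fc, y⟫ = Fc y := by
    have := congrArg (fun f : StrongDual ℝ H => f y)
      ((InnerProductSpace.toDual ℝ H).apply_symm_apply Fc)
    simpa [InnerProductSpace.toDual_apply_apply] using this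
  rw [hxb]
  exact hc y

/-- `a ≥ 0`, `b ≥ 0`, `a^2 ≤ b*a` implies `a ≤ b`. -/
lemma aux_sq_le (a b : ℝ) (ha : 0 ≤ a) (hb : 0 ≤ b) (h : a ^ 2 ≤ b * a) : a ≤ b := by
  rcases eq_or_lt_of_le ha with h0 | h0
  · simpa [← h0] using hb
  · nlinarith

end Aux

set_option maxHeartbeats 2000000 in
/-- The proximal point iteration `x(n+1) = l₁ • J₁ (x n) + l₂ • J₂ (x n)` converges
weakly to a fixed point of the resolvent average, provided one exists. -/
theorem proximal_point_iteration_weakly_converges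
    {H : Type*} [NormedAddCommGroup H] [InnerProductSpace ℝ H] [CompleteSpace H]
    (l₁ l₂ : ℝ) (hl₁ : 0 < l₁) (hl₂ : 0 < l₂) (hl : l₁ + l₂ = 1)
    (A₁ A₂ : Set (H × H))
    (hA₁ : ∀ x u y v : H, (x, u) ∈ A₁ → (y, v) ∈ A₁ → 0 ≤ ⟪x - y, u - v⟫)
    (hA₂ : ∀ x u y v : H, (x, u) ∈ A₂ → (y, v) ∈ A₂ → 0 ≤ ⟪x - y, u - v⟫)
    (J₁ J₂ : H → H)
    (hJ₁ : ∀ z : H, (J₁ z, z - J₁ z) ∈ A₁)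
    (hJ₂ : ∀ z : H, (J₂ z, z - J₂ z) ∈ A₂)
    (hFix : ∃ z : H, z = l₁ • J₁ z + l₂ • J₂ z)
    (x : ℕ → H)
    (hx : ∀ n : ℕ, x (n + 1) = l₁ • J₁ (x n) + l₂ • J₂ (x n)) :
    ∃ xbar : H, xbar = l₁ • J₁ xbar + l₂ • J₂ xbar ∧
      ∀ φ : H, Filter.Tendsto (fun n => ⟪x n, φ⟫) Filter.atTop (nhds ⟪xbar, φ⟫) := by
  classical
  set T : H → H := fun z => l₁ • J₁ z + l₂ • J₂ z with hT
  -- Firm nonexpansiveness of T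
  have hfirm : ∀ z w : H, ‖T z - T w‖ ^ 2 ≤ ⟪z - w, T z - T w⟫ := by
    intro z w
    set d₁ := J₁ z - J₁ w with hd₁
    set d₂ := J₂ z - J₂ w with hd₂
    have h1 : ‖d₁‖ ^ 2 ≤ ⟪z - w, d₁⟫ := by
      have := hA₁ (J₁ z) (z - J₁ z) (J₁ w) (w - J₁ w) (hJ₁ z) (hJ₁ w)
      have h' : (0 : ℝ) ≤ ⟪d₁, z - w⟫ - ⟪d₁, d₁⟫ := by
        have heq : (z - J₁ z) - (w - J₁ w) = (z - w) - d₁ := by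
          simp [hd₁]; abel
        rw [heq, inner_sub_right] at this
        linarith
      have : ⟪d₁, d₁⟫ ≤ ⟪d₁, z - w⟫ := by linarith
      calc ‖d₁‖ ^ 2 = ⟪d₁, d₁⟫ := (real_inner_self_eq_norm_sq d₁).symm
        _ ≤ ⟪d₁, z - w⟫ := this
        _ = ⟪z - w, d₁⟫ := real_inner_comm _ _
    have h2 : ‖d₂‖ ^ 2 ≤ ⟪z - w, d₂⟫ := by
      have := hA₂ (J₂ z) (z - J₂ z) (J₂ w) (w - J₂ w) (hJ₂ z) (hJ₂ w)
      have h' : (0 : ℝ) ≤ ⟪d₂, z - w⟫ - ⟪d₂, d₂⟫ := by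
        have heq : (z - J₂ z) - (w - J₂ w) = (z - w) - d₂ := by
          simp [hd₂]; abel
        rw [heq, inner_sub_right] at this
        linarith
      have : ⟪d₂, d₂⟫ ≤ ⟪d₂, z - w⟫ := by linarith
      calc ‖d₂‖ ^ 2 = ⟪d₂, d₂⟫ := (real_inner_self_eq_norm_sq d₂).symm
        _ ≤ ⟪d₂, z - w⟫ := this
        _ = ⟪z - w, d₂⟫ := real_inner_comm _ _
    have hTd : T z - T w = l₁ • d₁ + l₂ • d₂ := by
      simp [hT, hd₁, hd₂, smul_sub]; abel
    have hrhs : ⟪z - w, T z - T w⟫ = l₁ * ⟪z - w, d₁⟫ + l₂ * ⟪z - w, d₂⟫ := by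
      rw [hTd, inner_add_right, inner_smul_right, inner_smul_right]
    have hconv : ‖l₁ • d₁ + l₂ • d₂‖ ^ 2 ≤ l₁ * ‖d₁‖ ^ 2 + l₂ * ‖d₂‖ ^ 2 := by
      have hexp : ‖l₁ • d₁ + l₂ • d₂‖ ^ 2
          = l₁ ^ 2 * ‖d₁‖ ^ 2 + 2 * (l₁ * l₂ * ⟪d₁, d₂⟫) + l₂ ^ 2 * ‖d₂‖ ^ 2 := by
        rw [norm_add_sq_real, inner_smul_left, inner_smul_right, norm_smul, norm_smul]
        simp [Real.norm_eq_abs, abs_of_pos hl₁, abs_of_pos hl₂]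
        ring
      have hcs : ⟪d₁, d₂⟫ ≤ ‖d₁‖ * ‖d₂‖ := real_inner_le_norm _ _
      have hn1 : (0:ℝ) ≤ ‖d₁‖ := norm_nonneg _
      have hn2 : (0:ℝ) ≤ ‖d₂‖ := norm_nonneg _
      nlinarith [sq_nonneg (‖d₁‖ - ‖d₂‖), mul_pos hl₁ hl₂,
        mul_nonneg (mul_pos hl₁ hl₂).le (sq_nonneg (‖d₁‖ - ‖d₂‖)),
        mul_le_mul_of_nonneg_left hcs (mul_pos hl₁ hl₂).le]
    rw [hrhs, hTd]
    nlinarith [mul_le_mul_of_nonneg_left h1 hl₁.le, mul_le_mul_of_nonneg_left h2 hl₂.le]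
  -- Nonexpansiveness
  have hnonexp : ∀ z w : H, ‖T z - T w‖ ≤ ‖z - w‖ := by
    intro z w
    refine aux_sq_le _ _ (norm_nonneg _) (norm_nonneg _) ?_
    calc ‖T z - T w‖ ^ 2 ≤ ⟪z - w, T z - T w⟫ := hfirm z w
      _ ≤ ‖z - w‖ * ‖T z - T w‖ := real_inner_le_norm _ _
  -- Fejér inequality
  have hfejer : ∀ p : H, p = T p → ∀ z : H,
      ‖z - T z‖ ^ 2 + ‖T z - p‖ ^ 2 ≤ ‖z - p‖ ^ 2 := by
    intro p hp z
    have h := hfirm z p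
    rw [← hp] at h
    have hexp : ‖(z - p) - (T z - p)‖ ^ 2
        = ‖z - p‖ ^ 2 - 2 * ⟪z - p, T z - p⟫ + ‖T z - p‖ ^ 2 := norm_sub_sq_real _ _
    have heq : (z - p) - (T z - p) = z - T z := by abel
    rw [heq] at hexp
    nlinarith
  obtain ⟨p₀, hp₀⟩ := hFix
  have hp₀' : p₀ = T p₀ := hp₀
  -- iterate step
  have hstep : ∀ n, x (n + 1) = T (x n) := fun n => hx n
  -- Fejér monotonicity wrt any fixed point
  have hdec : ∀ p : H, p = T p → ∀ n,
      ‖x n - x (n+1)‖ ^ 2 + ‖x (n+1) - p‖ ^ 2 ≤ ‖x n - p‖ ^ 2 := by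
    intro p hp n
    have := hfejer p hp (x n)
    rwa [← hstep n] at this
  have hanti : ∀ p : H, p = T p → Antitone (fun n => ‖x n - p‖ ^ 2) := by
    intro p hp
    refine antitone_nat_of_succ_le (fun n => ?_)
    have := hdec p hp n
    nlinarith [sq_nonneg ‖x n - x (n+1)‖]
  -- convergence of ‖x n - p‖² for every fixed point
  have hconvp : ∀ p : H, p = T p →
      ∃ β : ℝ, Tendsto (fun n => ‖x n - p‖ ^ 2) atTop (nhds β) := by
    intro p hp
    refine ⟨_, tendsto_atTop_ciInf (hanti p hp) ⟨0, ?_⟩⟩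
    rintro r ⟨n, rfl⟩
    positivity
  -- boundedness
  have hxb : ∀ n, ‖x n - p₀‖ ≤ ‖x 0 - p₀‖ := by
    intro n
    have h : ‖x n - p₀‖ ^ 2 ≤ ‖x 0 - p₀‖ ^ 2 := hanti p₀ hp₀' (Nat.zero_le n)
    have := Real.sqrt_le_sqrt h
    rwa [Real.sqrt_sq (norm_nonneg _), Real.sqrt_sq (norm_nonneg _)] at this
  set B : ℝ := ‖x 0 - p₀‖ + ‖p₀‖ with hBdef
  have hB : ∀ n, ‖x n‖ ≤ B := by
    intro n
    calc ‖x n‖ = ‖(x n - p₀) + p₀‖ := by rw [sub_add_cancel]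
      _ ≤ ‖x n - p₀‖ + ‖p₀‖ := norm_add_le _ _
      _ ≤ B := by have := hxb n; simp [hBdef]; linarith
  -- asymptotic regularity : ‖x (n+1) - x n‖ → 0
  have hreg : Tendsto (fun n => ‖x (n+1) - x n‖) atTop (nhds 0) := by
    obtain ⟨β, hβ⟩ := hconvp p₀ hp₀'
    have hsq : Tendsto (fun n => ‖x (n+1) - x n‖ ^ 2) atTop (nhds 0) := by
      have hup : Tendsto (fun n => ‖x n - p₀‖ ^ 2 - ‖x (n+1) - p₀‖ ^ 2) atTop (nhds 0) := by
        have := hβ.sub (hβ.comp (tendsto_add_atTop_nat 1))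
        simpa using this
      refine squeeze_zero (fun n => by positivity) (fun n => ?_) hup
      have := hdec p₀ hp₀' n
      have : ‖x n - x (n+1)‖ ^ 2 ≤ ‖x n - p₀‖ ^ 2 - ‖x (n+1) - p₀‖ ^ 2 := by linarith
      simpa [norm_sub_rev (x n) (x (n+1))] using this
    have := hsq.sqrt
    simpa [Real.sqrt_sq (norm_nonneg _)] using this
  -- Key: every ultrafilter extending atTop gives a weak cluster point which is fixed
  have key : ∀ U : Ultrafilter ℕ, (↑U : Filter ℕ) ≤ atTop →
      ∃ p : H, p = T p ∧
        ∀ y : H, Tendsto (fun n => ⟪x n, y⟫) (↑U) (nhds ⟪p, y⟫) := by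
    intro U hU
    obtain ⟨xbar, hweak⟩ := aux_weak_limit U x B hB
    set y := T xbar with hy
    -- d n := ‖x n - xbar‖² has an ultrafilter limit L
    obtain ⟨L, _, hL⟩ := aux_ultrafilter_limit U (fun n => ‖x n - xbar‖ ^ 2)
      ((B + ‖xbar‖) ^ 2) (by
        intro n
        have h1 : ‖x n - xbar‖ ≤ B + ‖xbar‖ :=
          le_trans (norm_sub_le _ _) (by have := hB n; linarith)
        have h0 : (0:ℝ) ≤ ‖x n - xbar‖ := norm_nonneg _
        rw [abs_of_nonneg (by positivity)]
        exact pow_le_pow_left₀ h0 h1 2)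
    -- pointwise bound : ‖x n - y‖ ≤ e n + √(d n)
    have hpt : ∀ n, ‖x n - y‖ ^ 2 ≤
        (‖x (n+1) - x n‖ + Real.sqrt (‖x n - xbar‖ ^ 2)) ^ 2 := by
      intro n
      have h1 : ‖x n - y‖ ≤ ‖x n - x (n+1)‖ + ‖x (n+1) - y‖ := by
        have : x n - y = (x n - x (n+1)) + (x (n+1) - y) := by abel
        rw [this]; exact norm_add_le _ _
      have h2 : ‖x (n+1) - y‖ ≤ ‖x n - xbar‖ := by
        rw [hstep n, hy]; exact hnonexp (x n) xbar
      have h3 : ‖x n - y‖ ≤ ‖x (n+1) - x n‖ + ‖x n - xbar‖ := by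
        rw [norm_sub_rev (x (n+1)) (x n)] at *
        linarith
      rw [Real.sqrt_sq (norm_nonneg _)]
      have hnn : (0:ℝ) ≤ ‖x n - y‖ := norm_nonneg _
      nlinarith
    -- upper limit along U
    have hgU : Tendsto (fun n => (‖x (n+1) - x n‖ + Real.sqrt (‖x n - xbar‖ ^ 2)) ^ 2)
        (↑U) (nhds ((0 + Real.sqrt L) ^ 2)) := by
      have he : Tendsto (fun n => ‖x (n+1) - x n‖) (↑U) (nhds 0) := hreg.mono_left hU
      exact ((he.add hL.sqrt).pow 2)
    -- lower limit along U
    have hfU : Tendsto (fun n => ‖x n - y‖ ^ 2) (↑U) (nhds (L + ‖xbar - y‖ ^ 2)) := by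
      have hid : ∀ n, ‖x n - y‖ ^ 2 =
          ‖x n - xbar‖ ^ 2 + 2 * (⟪x n, xbar - y⟫ - ⟪xbar, xbar - y⟫) + ‖xbar - y‖ ^ 2 := by
        intro n
        have : x n - y = (x n - xbar) + (xbar - y) := by abel
        rw [this, norm_add_sq_real, inner_sub_left]
      have hinner : Tendsto (fun n => ⟪x n, xbar - y⟫ - ⟪xbar, xbar - y⟫) (↑U) (nhds 0) := by
        have := (hweak (xbar - y)).sub_const ⟪xbar, xbar - y⟫
        simpa using this
      have := (hL.add (hinner.const_mul 2)).add_const (‖xbar - y‖ ^ 2)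
      simp only [mul_zero, add_zero] at this
      refine Tendsto.congr (fun n => (hid n).symm) ?_
      convert this using 2
      all_goals ring
    -- compare limits
    haveI : ((↑U : Filter ℕ)).NeBot := U.neBot
    have hcmp : L + ‖xbar - y‖ ^ 2 ≤ (0 + Real.sqrt L) ^ 2 :=
      le_of_tendsto_of_tendsto' (b := (↑U : Filter ℕ)) hfU hgU hpt
    have hL0 : 0 ≤ L := by
      have : Tendsto (fun n => (0:ℝ)) ((↑U : Filter ℕ)) (nhds 0) := tendsto_const_nhds
      exact le_of_tendsto_of_tendsto' this hL (fun n => by positivity)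
    have hsqL : (0 + Real.sqrt L) ^ 2 = L := by
      rw [zero_add, Real.sq_sqrt hL0]
    have hxy : xbar = y := by
      have h0 : ‖xbar - y‖ ^ 2 ≤ 0 := by rw [hsqL] at hcmp; linarith
      have : ‖xbar - y‖ = 0 := by nlinarith [norm_nonneg (xbar - y), sq_nonneg ‖xbar - y‖]
      have := norm_eq_zero.1 this
      exact sub_eq_zero.1 this
    exact ⟨xbar, hxy, hweak⟩
  -- Uniqueness of weak cluster points (Opial)
  have uniq : ∀ (U V : Ultrafilter ℕ), (↑U : Filter ℕ) ≤ atTop → (↑V : Filter ℕ) ≤ atTop →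
      ∀ p q : H, p = T p → q = T q →
      (∀ y, Tendsto (fun n => ⟪x n, y⟫) (↑U) (nhds ⟪p, y⟫)) →
      (∀ y, Tendsto (fun n => ⟪x n, y⟫) (↑V) (nhds ⟪q, y⟫)) → p = q := by
    intro U V hU hV p q hp hq hwp hwq
    obtain ⟨βp, hβp⟩ := hconvp p hp
    obtain ⟨βq, hβq⟩ := hconvp q hq
    have hid : ∀ n, ⟪x n, p - q⟫ =
        (‖x n - q‖ ^ 2 - ‖x n - p‖ ^ 2 + ‖p‖ ^ 2 - ‖q‖ ^ 2) / 2 := by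
      intro n
      rw [inner_sub_right, norm_sub_sq_real, norm_sub_sq_real]
      ring
    set c : ℝ := (βq - βp + ‖p‖ ^ 2 - ‖q‖ ^ 2) / 2 with hcdef
    have htc : Tendsto (fun n => ⟪x n, p - q⟫) atTop (nhds c) := by
      have := (((hβq.sub hβp).add_const (‖p‖ ^ 2)).sub_const (‖q‖ ^ 2)).div_const 2
      refine Tendsto.congr (fun n => (hid n).symm) ?_
      convert this using 2
    have h1 : ⟪p, p - q⟫ = c :=
      tendsto_nhds_unique (hwp (p - q)) (htc.mono_left hU)
    have h2 : ⟪q, p - q⟫ = c :=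
      tendsto_nhds_unique (hwq (p - q)) (htc.mono_left hV)
    have : ⟪p - q, p - q⟫ = 0 := by
      rw [inner_sub_left, h1, h2]; ring
    have := inner_self_eq_zero.1 this
    exact sub_eq_zero.1 this
  -- conclude
  set U₀ : Ultrafilter ℕ := Ultrafilter.of atTop with hU₀def
  have hU₀ : (↑U₀ : Filter ℕ) ≤ atTop := Ultrafilter.of_le _
  obtain ⟨xbar, hfix, hweak⟩ := key U₀ hU₀
  refine ⟨xbar, hfix, ?_⟩
  intro φ
  by_contra hcon
  rw [Metric.tendsto_atTop] at hcon
  push_neg at hcon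
  obtain ⟨ε, hε, hfreq⟩ := hcon
  have hfr : ∃ᶠ n in atTop, ε ≤ dist (⟪x n, φ⟫) ⟪xbar, φ⟫ :=
    frequently_atTop.2 hfreq
  have hne : (atTop ⊓ Filter.principal {n | ε ≤ dist (⟪x n, φ⟫) ⟪xbar, φ⟫}).NeBot :=
    frequently_iff_neBot.1 hfr
  set V : Ultrafilter ℕ := Ultrafilter.of (atTop ⊓ Filter.principal {n | ε ≤ dist (⟪x n, φ⟫) ⟪xbar, φ⟫}) with hVdef
  have hVle : (↑V : Filter ℕ) ≤ atTop ⊓ Filter.principal {n | ε ≤ dist (⟪x n, φ⟫) ⟪xbar, φ⟫} :=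
    Ultrafilter.of_le _
  have hVtop : (↑V : Filter ℕ) ≤ atTop := hVle.trans inf_le_left
  obtain ⟨q, hqfix, hqweak⟩ := key V hVtop
  have hq : q = xbar := uniq V U₀ hVtop hU₀ q xbar hqfix hfix hqweak hweak
  rw [hq] at hqweak
  have hclosed : IsClosed {r : ℝ | ε ≤ dist r ⟪xbar, φ⟫} :=
    isClosed_le continuous_const (continuous_id.dist continuous_const)
  have hev : ∀ᶠ n in (↑V : Filter ℕ), ⟪x n, φ⟫ ∈ {r : ℝ | ε ≤ dist r ⟪xbar, φ⟫} := by
    have : ∀ᶠ n in (↑V : Filter ℕ), n ∈ {n | ε ≤ dist (⟪x n, φ⟫) ⟪xbar, φ⟫} :=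
      hVle.trans inf_le_right (Filter.mem_principal_self _)
    exact this
  have hmem := hclosed.mem_of_tendsto (hqweak φ) hev
  simp only [Set.mem_setOf_eq, dist_self] at hmem
  linarith
end
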